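/- arXiv:2405.15639 — 14 statements merged into one kernel-verified Lean document; each statement's English description precedes it below -/
import Mathlib

section
/- Let N ≥ 2, let G > 0, let m : Fin N → ℝ be positive masses, let t₀ ∈ ℝ, and let initial positions p i ∈ EuclideanSpace ℝ (Fin 3) and initial velocities v i ∈ EuclideanSpace ℝ (Fin 3) be given with p i ≠ p j for all i ≠ j. Then there exists ε > 0 and functions r i : ℝ → EuclideanSpace ℝ (Fin 3), twice continuously differentiable on (t₀ − ε, t₀ + ε), such that r i t₀ = p i, (r i)' t₀ = v i, the positions remain pairwise distinct on (t₀ − ε, t₀ + ε), and for every t in this interval and every j, (r j)'' t = G • Σ_{i ≠ j} (m i / ‖r i t − r j t‖³) • (r i t − r j t); moreover, any two such solutions agree on a neighborhood of t₀. -/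
open Set Finset

/-- Newtonian acceleration of body `j` in the `N`-body problem. -/
noncomputable def nbodyAccel (N : ℕ) (G : ℝ) (m : Fin N → ℝ)
    (x : Fin N → EuclideanSpace ℝ (Fin 3)) (j : Fin N) : EuclideanSpace ℝ (Fin 3) :=
  G • ∑ i ∈ Finset.univ.filter (fun i => i ≠ j), (m i / ‖x i - x j‖ ^ 3) • (x i - x j)

/-- `r` is a solution of Newton's celestial mechanics equations on
`(t₀ - ε, t₀ + ε)` with initial positions `p` and velocities `v`. -/
def IsNBodySolution (N : ℕ) (G : ℝ) (m : Fin N → ℝ) (t₀ ε : ℝ)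
    (p v : Fin N → EuclideanSpace ℝ (Fin 3))
    (r : Fin N → ℝ → EuclideanSpace ℝ (Fin 3)) : Prop :=
  (∀ i, ContDiffOn ℝ 2 (r i) (Set.Ioo (t₀ - ε) (t₀ + ε))) ∧
  (∀ i, r i t₀ = p i) ∧
  (∀ i, deriv (r i) t₀ = v i) ∧
  (∀ t ∈ Set.Ioo (t₀ - ε) (t₀ + ε), ∀ i j, i ≠ j → r i t ≠ r j t) ∧
  (∀ t ∈ Set.Ioo (t₀ - ε) (t₀ + ε), ∀ j,
    deriv (deriv (r j)) t = nbodyAccel N G m (fun i => r i t) j)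

section Aux

open scoped Topology

local notation "E3" => EuclideanSpace ℝ (Fin 3)

/-- First-order vector field for the N-body problem. -/
noncomputable def nbodyField (N : ℕ) (G : ℝ) (m : Fin N → ℝ) :
    (Fin N → E3) × (Fin N → E3) → (Fin N → E3) × (Fin N → E3) :=
  fun z => (z.2, fun j => nbodyAccel N G m z.1 j)

/-- The open set of collision-free states. -/
def nbodyOmega (N : ℕ) : Set ((Fin N → E3) × (Fin N → E3)) :=
  {z | ∀ i j, i ≠ j → z.1 i ≠ z.1 j}

lemma isOpen_nbodyOmega (N : ℕ) : IsOpen (nbodyOmega N) := by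
  have : nbodyOmega N
      = ⋂ (i) (j) (_ : i ≠ j), {z : (Fin N → E3) × (Fin N → E3) | z.1 i = z.1 j}ᶜ := by
    ext z; simp [nbodyOmega]
  rw [this]
  refine isOpen_iInter_of_finite fun i => isOpen_iInter_of_finite fun j =>
    isOpen_iInter_of_finite fun _ => ?_
  exact (isClosed_eq ((continuous_apply i).comp continuous_fst)
    ((continuous_apply j).comp continuous_fst)).isOpen_compl

lemma nbodyAccel_contDiffAt (N : ℕ) (G : ℝ) (m : Fin N → ℝ)
    {x₀ : Fin N → E3} (hx : ∀ i j, i ≠ j → x₀ i ≠ x₀ j) (j : Fin N) :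
    ContDiffAt ℝ 1 (fun x => nbodyAccel N G m x j) x₀ := by
  unfold nbodyAccel
  apply ContDiffAt.const_smul
  apply ContDiffAt.sum
  intro i hi
  have hij : i ≠ j := (Finset.mem_filter.1 hi).2
  have hsub : ContDiffAt ℝ 1 (fun x : Fin N → E3 => x i - x j) x₀ :=
    ((ContinuousLinearMap.proj (R := ℝ) (φ := fun _ : Fin N => EuclideanSpace ℝ (Fin 3)) i).contDiff.sub
      (ContinuousLinearMap.proj (R := ℝ) (φ := fun _ : Fin N => EuclideanSpace ℝ (Fin 3)) j).contDiff).contDiffAt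
  have hne : x₀ i - x₀ j ≠ 0 := sub_ne_zero.2 (hx i j hij)
  have hnorm : ContDiffAt ℝ 1 (fun x : Fin N → E3 => ‖x i - x j‖) x₀ := hsub.norm ℝ hne
  have hden : ContDiffAt ℝ 1 (fun x : Fin N → E3 => m i / ‖x i - x j‖ ^ 3) x₀ :=
    ContDiffAt.div contDiffAt_const (hnorm.pow 3)
      (pow_ne_zero _ (norm_ne_zero_iff.2 hne))
  exact hden.smul hsub

lemma nbodyField_contDiffAt (N : ℕ) (G : ℝ) (m : Fin N → ℝ)
    {z : (Fin N → E3) × (Fin N → E3)} (hz : z ∈ nbodyOmega N) :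
    ContDiffAt ℝ 1 (nbodyField N G m) z := by
  unfold nbodyField
  refine ContDiffAt.prodMk contDiffAt_snd ?_
  rw [contDiffAt_pi]
  intro j
  exact (nbodyAccel_contDiffAt N G m hz j).comp z contDiffAt_fst

/-- A C² N-body solution yields a first-order solution of `nbodyField`. -/
lemma nbody_firstOrder (N : ℕ) (G : ℝ) (m : Fin N → ℝ) {a b : ℝ}
    (r : Fin N → ℝ → E3)
    (hC : ∀ i, ContDiffOn ℝ 2 (r i) (Set.Ioo a b))
    (hacc : ∀ t ∈ Set.Ioo a b, ∀ j,
      deriv (deriv (r j)) t = nbodyAccel N G m (fun i => r i t) j)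
    {t : ℝ} (ht : t ∈ Set.Ioo a b) :
    HasDerivAt (fun s => ((fun i => r i s, fun i => deriv (r i) s)
        : (Fin N → E3) × (Fin N → E3)))
      (nbodyField N G m (fun i => r i t, fun i => deriv (r i) t)) t := by
  have h1 : ∀ i, HasDerivAt (r i) (deriv (r i) t) t := fun i =>
    (((hC i).differentiableOn (by norm_num)).differentiableAt
      (isOpen_Ioo.mem_nhds ht)).hasDerivAt
  have h2 : ∀ i, HasDerivAt (deriv (r i)) (nbodyAccel N G m (fun k => r k t) i) t := by
    intro i
    have hC1 : ContDiffOn ℝ 1 (deriv (r i)) (Set.Ioo a b) := by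
      have h2' : ContDiffOn ℝ (1 + 1) (r i) (Set.Ioo a b) := by
        rw [show ((1 : WithTop ℕ∞) + 1) = 2 by norm_num]; exact hC i
      exact ((contDiffOn_succ_iff_deriv_of_isOpen isOpen_Ioo).1 h2').2.2
    have hd : DifferentiableAt ℝ (deriv (r i)) t :=
      (hC1.differentiableOn one_ne_zero).differentiableAt (isOpen_Ioo.mem_nhds ht)
    have := hd.hasDerivAt
    rwa [hacc t ht i] at this
  exact HasDerivAt.prodMk (hasDerivAt_pi.2 h1) (hasDerivAt_pi.2 h2)

end Aux

open scoped Topology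

/-- Local existence and uniqueness for Newton's celestial mechanics equations. -/
theorem nbody_wellPosed (N : ℕ) (hN : 2 ≤ N) (G : ℝ) (hG : 0 < G)
    (m : Fin N → ℝ) (hm : ∀ i, 0 < m i) (t₀ : ℝ)
    (p v : Fin N → EuclideanSpace ℝ (Fin 3))
    (hp : ∀ i j, i ≠ j → p i ≠ p j) :
    ∃ ε > (0 : ℝ),
      (∃ r : Fin N → ℝ → EuclideanSpace ℝ (Fin 3),
        IsNBodySolution N G m t₀ ε p v r) ∧
      (∀ r₁ r₂ : Fin N → ℝ → EuclideanSpace ℝ (Fin 3),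
        IsNBodySolution N G m t₀ ε p v r₁ →
        IsNBodySolution N G m t₀ ε p v r₂ →
        ∃ δ > (0 : ℝ), ∀ t ∈ Set.Ioo (t₀ - δ) (t₀ + δ), ∀ i, r₁ i t = r₂ i t) := by
  classical
  have E3def : True := trivial
  set Φ := nbodyField N G m with hΦdef
  have hx₀Ω : ((p, v) : (Fin N → EuclideanSpace ℝ (Fin 3)) × (Fin N → EuclideanSpace ℝ (Fin 3))) ∈ nbodyOmega N := hp
  have hΦcd : ∀ z ∈ nbodyOmega N, ContDiffAt ℝ 1 Φ z :=
    fun z hz => nbodyField_contDiffAt N G m hz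
  obtain ⟨f, hf0, ε₁, hε₁, hfd₁⟩ :=
    (hΦcd (p, v) hx₀Ω).exists_forall_mem_closedBall_exists_eq_forall_mem_Ioo_hasDerivAt₀ t₀
  have hcont₀ : ContinuousAt f t₀ :=
    (hfd₁ t₀ ⟨by linarith, by linarith⟩).continuousAt
  have hmemΩ : {t | f t ∈ nbodyOmega N} ∈ 𝓝 t₀ :=
    hcont₀ ((isOpen_nbodyOmega N).mem_nhds (by rw [hf0]; exact hx₀Ω))
  have hmemI : Set.Ioo (t₀ - ε₁) (t₀ + ε₁) ∈ 𝓝 t₀ :=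
    Ioo_mem_nhds (by linarith) (by linarith)
  obtain ⟨ε, hε, hsub⟩ := Metric.mem_nhds_iff.1 (Filter.inter_mem hmemΩ hmemI)
  rw [Real.ball_eq_Ioo] at hsub
  set I := Set.Ioo (t₀ - ε) (t₀ + ε) with hIdef
  have ht₀I : t₀ ∈ I := ⟨by linarith, by linarith⟩
  have hIΩ : ∀ t ∈ I, f t ∈ nbodyOmega N := fun t ht => (hsub ht).1
  have hfd : ∀ t ∈ I, HasDerivAt f (Φ (f t)) t := fun t ht => hfd₁ t (hsub ht).2
  have hderiv_eq : ∀ t ∈ I, deriv f t = Φ (f t) := fun t ht => (hfd t ht).deriv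
  have hΦcont : ContinuousOn (fun t => Φ (f t)) I := fun t ht =>
    ((hΦcd _ (hIΩ t ht)).continuousAt.comp (hfd t ht).continuousAt).continuousWithinAt
  have hf1 : ContDiffOn ℝ 1 f I := by
    rw [show (1 : WithTop ℕ∞) = 0 + 1 by norm_num,
      contDiffOn_succ_iff_deriv_of_isOpen isOpen_Ioo]
    refine ⟨fun t ht => (hfd t ht).differentiableAt.differentiableWithinAt, by simp, ?_⟩
    rw [contDiffOn_zero]
    exact hΦcont.congr hderiv_eq
  have hf2 : ContDiffOn ℝ 2 f I := by
    rw [show (2 : WithTop ℕ∞) = 1 + 1 by norm_num,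
      contDiffOn_succ_iff_deriv_of_isOpen isOpen_Ioo]
    refine ⟨fun t ht => (hfd t ht).differentiableAt.differentiableWithinAt, by simp, ?_⟩
    have hΦ1 : ContDiffOn ℝ 1 Φ (nbodyOmega N) :=
      fun z hz => (hΦcd z hz).contDiffWithinAt
    exact (hΦ1.comp hf1 hIΩ).congr hderiv_eq
  -- component functions
  set r : Fin N → ℝ → EuclideanSpace ℝ (Fin 3) := fun i t => (f t).1 i with hrdef
  have hr' : ∀ i, ∀ t ∈ I, HasDerivAt (r i) ((f t).2 i) t := by
    intro i t ht
    have hπ := ((ContinuousLinearMap.proj (R := ℝ) (φ := fun _ : Fin N => EuclideanSpace ℝ (Fin 3)) i).comp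
      (ContinuousLinearMap.fst ℝ (Fin N → EuclideanSpace ℝ (Fin 3)) (Fin N → EuclideanSpace ℝ (Fin 3)))).hasFDerivAt.comp_hasDerivAt
      t (hfd t ht)
    simp only [hΦdef, nbodyField] at hπ
    exact hπ
  have hg' : ∀ i, ∀ t ∈ I,
      HasDerivAt (fun s => (f s).2 i) (nbodyAccel N G m (f t).1 i) t := by
    intro i t ht
    have hπ := ((ContinuousLinearMap.proj (R := ℝ) (φ := fun _ : Fin N => EuclideanSpace ℝ (Fin 3)) i).comp
      (ContinuousLinearMap.snd ℝ (Fin N → EuclideanSpace ℝ (Fin 3)) (Fin N → EuclideanSpace ℝ (Fin 3)))).hasFDerivAt.comp_hasDerivAt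
      t (hfd t ht)
    simp only [hΦdef, nbodyField] at hπ
    exact hπ
  refine ⟨ε, hε, ⟨r, ?_, ?_, ?_, ?_, ?_⟩, ?_⟩
  · -- C²
    intro i
    have := ((ContinuousLinearMap.proj (R := ℝ) (φ := fun _ : Fin N => EuclideanSpace ℝ (Fin 3)) i).comp
      (ContinuousLinearMap.fst ℝ (Fin N → EuclideanSpace ℝ (Fin 3)) (Fin N → EuclideanSpace ℝ (Fin 3)))).contDiff.comp_contDiffOn
      (𝕜 := ℝ) (n := 2) hf2
    exact this
  · intro i; rw [hrdef]; simp only [hf0]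
  · intro i
    rw [(hr' i t₀ ht₀I).deriv, hf0]
  · intro t ht i j hij
    exact hIΩ t ht i j hij
  · -- second derivative equation
    intro t ht j
    have heq : deriv (r j) =ᶠ[𝓝 t] fun s => (f s).2 j := by
      filter_upwards [isOpen_Ioo.mem_nhds ht] with s hs using (hr' j s hs).deriv
    rw [heq.deriv_eq, (hg' j t ht).deriv]
  · -- uniqueness
    rintro r₁ r₂ ⟨hC₁, hp₁, hv₁, hd₁, ha₁⟩ ⟨hC₂, hp₂, hv₂, hd₂, ha₂⟩
    set F₁ : ℝ → (Fin N → EuclideanSpace ℝ (Fin 3)) × (Fin N → EuclideanSpace ℝ (Fin 3)) :=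
      fun t => (fun i => r₁ i t, fun i => deriv (r₁ i) t) with hF₁def
    set F₂ : ℝ → (Fin N → EuclideanSpace ℝ (Fin 3)) × (Fin N → EuclideanSpace ℝ (Fin 3)) :=
      fun t => (fun i => r₂ i t, fun i => deriv (r₂ i) t) with hF₂def
    have hF₁' : ∀ t ∈ I, HasDerivAt F₁ (Φ (F₁ t)) t := fun t ht =>
      nbody_firstOrder N G m r₁ hC₁ ha₁ ht
    have hF₂' : ∀ t ∈ I, HasDerivAt F₂ (Φ (F₂ t)) t := fun t ht =>
      nbody_firstOrder N G m r₂ hC₂ ha₂ ht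
    have hF₁0 : F₁ t₀ = (p, v) := by
      rw [hF₁def]
      exact Prod.ext (funext hp₁) (funext hv₁)
    have hF₂0 : F₂ t₀ = (p, v) := by
      rw [hF₂def]
      exact Prod.ext (funext hp₂) (funext hv₂)
    obtain ⟨K, s, hs, hlip⟩ := (hΦcd (p, v) hx₀Ω).exists_lipschitzOnWith
    have hs₁ : {t | F₁ t ∈ s} ∈ 𝓝 t₀ :=
      (hF₁' t₀ ht₀I).continuousAt (by rw [hF₁0]; exact hs)
    have hs₂ : {t | F₂ t ∈ s} ∈ 𝓝 t₀ :=
      (hF₂' t₀ ht₀I).continuousAt (by rw [hF₂0]; exact hs)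
    have hI𝓝 : I ∈ 𝓝 t₀ := Ioo_mem_nhds ht₀I.1 ht₀I.2
    obtain ⟨δ, hδ, hsubδ⟩ :=
      Metric.mem_nhds_iff.1 (Filter.inter_mem (Filter.inter_mem hs₁ hs₂) hI𝓝)
    rw [Real.ball_eq_Ioo] at hsubδ
    refine ⟨δ, hδ, ?_⟩
    have huniq : Set.EqOn F₁ F₂ (Set.Ioo (t₀ - δ) (t₀ + δ)) := by
      refine ODE_solution_unique_of_mem_Ioo (v := fun _ => Φ) (s := fun _ => s)
        (fun _ _ => hlip) ⟨by linarith, by linarith⟩ ?_ ?_ (hF₁0.trans hF₂0.symm)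
      · intro t ht
        exact ⟨hF₁' t (hsubδ ht).2, (hsubδ ht).1.1⟩
      · intro t ht
        exact ⟨hF₂' t (hsubδ ht).2, (hsubδ ht).1.2⟩
    intro t ht i
    have := huniq ht
    exact congrFun (congrArg Prod.fst this) i
end

section
/- Let G > 0 and m₂, m₃ > 0, and let v₂, v₃ ∈ EuclideanSpace ℝ (Fin 3) be nonzero vectors satisfying (G m₂ / ‖v₂‖³) • v₂ + (G m₃ / ‖v₃‖³) • v₃ = 0. Then ‖v₂‖ = √(m₂/m₃) · ‖v₃‖ and v₂ = −√(m₂/m₃) • v₃. -/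
open Set

/-- The algebraic constraint `(G m₂/‖v₂‖³) • v₂ + (G m₃/‖v₃‖³) • v₃ = 0` on
nonzero vectors forces `‖v₂‖ = √(m₂/m₃) ‖v₃‖` and `v₂ = -√(m₂/m₃) • v₃`. -/
theorem bcos_constraint_antipodal (G m₂ m₃ : ℝ) (hG : 0 < G) (hm₂ : 0 < m₂) (hm₃ : 0 < m₃)
    (v₂ v₃ : EuclideanSpace ℝ (Fin 3)) (hv₂ : v₂ ≠ 0) (hv₃ : v₃ ≠ 0)
    (h : (G * m₂ / ‖v₂‖ ^ 3) • v₂ + (G * m₃ / ‖v₃‖ ^ 3) • v₃ = 0) :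
    ‖v₂‖ = Real.sqrt (m₂ / m₃) * ‖v₃‖ ∧ v₂ = -(Real.sqrt (m₂ / m₃) • v₃) := by
  have hr₂ : (0:ℝ) < ‖v₂‖ := norm_pos_iff.mpr hv₂
  have hr₃ : (0:ℝ) < ‖v₃‖ := norm_pos_iff.mpr hv₃
  have ha : 0 < G * m₂ / ‖v₂‖ ^ 3 := by positivity
  have hb : 0 < G * m₃ / ‖v₃‖ ^ 3 := by positivity
  have heq : (G * m₂ / ‖v₂‖ ^ 3) • v₂ = -((G * m₃ / ‖v₃‖ ^ 3) • v₃) := by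
    rw [eq_neg_iff_add_eq_zero]; exact h
  have hnorm : (G * m₂ / ‖v₂‖ ^ 3) * ‖v₂‖ = (G * m₃ / ‖v₃‖ ^ 3) * ‖v₃‖ := by
    have := congrArg norm heq
    simpa [norm_smul, abs_div, abs_mul, abs_of_pos hG, abs_of_pos hm₂, abs_of_pos hm₃,
      abs_norm] using this
  have key : m₂ * ‖v₃‖ ^ 2 = m₃ * ‖v₂‖ ^ 2 := by
    have h1 : G * m₂ * ‖v₃‖ ^ 3 * ‖v₂‖ = G * m₃ * ‖v₂‖ ^ 3 * ‖v₃‖ := by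
      field_simp at hnorm
      linear_combination (G * ‖v₂‖ * ‖v₃‖) * hnorm
    have h2 : (G * ‖v₂‖ * ‖v₃‖) * (m₂ * ‖v₃‖ ^ 2) = (G * ‖v₂‖ * ‖v₃‖) * (m₃ * ‖v₂‖ ^ 2) := by
      linear_combination h1
    exact mul_left_cancel₀ (by positivity) h2
  set c : ℝ := Real.sqrt (m₂ / m₃) with hc
  have hcsq : c ^ 2 = m₂ / m₃ := Real.sq_sqrt (by positivity)
  have hcpos : 0 < c := Real.sqrt_pos.mpr (by positivity)
  have hratio : ‖v₂‖ = c * ‖v₃‖ := by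
    have h1 : ‖v₂‖ ^ 2 = (c * ‖v₃‖) ^ 2 := by
      rw [mul_pow, hcsq]; field_simp; linarith [key]
    exact (pow_left_inj₀ hr₂.le (by positivity) two_ne_zero).mp h1
  refine ⟨hratio, ?_⟩
  have hane : (G * m₂ / ‖v₂‖ ^ 3) ≠ 0 := ha.ne'
  have hcoef : (G * m₂ / ‖v₂‖ ^ 3) * c = G * m₃ / ‖v₃‖ ^ 3 := by
    rw [hratio]
    have hc2 : c ^ 2 * m₃ = m₂ := by rw [hcsq]; field_simp
    field_simp
    ring_nf
    linear_combination (-1 : ℝ) * hc2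
  have : (G * m₂ / ‖v₂‖ ^ 3) • v₂ = (G * m₂ / ‖v₂‖ ^ 3) • (-(c • v₃)) := by
    rw [heq, smul_neg, smul_smul, hcoef]
  exact smul_right_injective _ hane this
end

section
/- Let G > 0 and m₁, m₂, m₃ > 0. Suppose r₂, r₃ : ℝ → EuclideanSpace ℝ (Fin 3) are twice differentiable on a nonempty open interval I, with r₂ t ≠ 0, r₃ t ≠ 0, and r₂ t ≠ r₃ t for all t ∈ I, and suppose that on I the body-centered three-body system (S1) holds: 0 = (G m₂/‖r₂ t‖³) • r₂ t + (G m₃/‖r₃ t‖³) • r₃ t, r₂'' t = −(G m₁/‖r₂ t‖³) • r₂ t + (G m₃/‖r₃ t − r₂ t‖³) • (r₃ t − r₂ t), and r₃'' t = −(G m₁/‖r₃ t‖³) • r₃ t + (G m₂/‖r₂ t − r₃ t‖³) • (r₂ t − r₃ t). Then m₂ = m₃. -/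
open Set

private lemma bcos_aux_sq (G m₂ m₃ ρ₂ ρ₃ c : ℝ) (hG : 0 < G) (hm₂ : 0 < m₂) (hm₃ : 0 < m₃)
    (hρ₂ : 0 < ρ₂) (hρ₃ : 0 < ρ₃) (hc : 0 < c)
    (h1 : ρ₃ = c * ρ₂) (h2 : c * (G * m₃ / ρ₃ ^ 3) = G * m₂ / ρ₂ ^ 3) :
    c ^ 2 = m₃ / m₂ := by
  subst h1
  have hρ₂' : ρ₂ ≠ 0 := hρ₂.ne'
  have hc' : c ≠ 0 := hc.ne'
  field_simp at h2 ⊢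
  have h3 : (c * G * ρ₂ ^ 3) * (m₃ - c ^ 2 * m₂) = 0 := by linear_combination (c * G * ρ₂ ^ 3) * h2
  have h4 : m₃ - c ^ 2 * m₂ = 0 := by
    rcases mul_eq_zero.mp h3 with h | h
    · exact absurd h (by positivity)
    · exact h
  linarith

private lemma bcos_aux_final (G m₁ m₂ m₃ k ρ : ℝ) (hG : 0 < G) (hm₁ : 0 < m₁) (hm₂ : 0 < m₂)
    (hk0 : 0 < k) (hρ : 0 < ρ) (hm₃eq : m₃ = k ^ 2 * m₂)
    (hscal : (-(G * m₁ / (k*ρ)^3) * (-k) + (G * m₂ / ((k+1)*ρ)^3) * (k+1)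
      - (-k) * (-(G * m₁ / ρ^3) + (G * m₃ / ((k+1)*ρ)^3) * (-(k+1)))) = 0) :
    m₂ = m₃ := by
  subst hm₃eq
  have hk1 : k + 1 ≠ 0 := by positivity
  have hkne : k ≠ 0 := hk0.ne'
  have hρne : ρ ≠ 0 := hρ.ne'
  field_simp at hscal
  have hpoly : (G * k * (k+1)^4 * ρ ^ 9) * ((k^3 - 1) * (m₁ * (k+1)^2 + k^2 * m₂)) = 0 := by
    linear_combination -(k * (k+1)^4 * ρ^9) * hscal
  have h2 : (k^3 - 1) * (m₁ * (k+1)^2 + k^2 * m₂) = 0 := by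
    rcases mul_eq_zero.mp hpoly with h | h
    · exact absurd h (by positivity)
    · exact h
  have hk3 : k ^ 3 = 1 := by
    have hpos : 0 < m₁ * (k+1)^2 + k^2 * m₂ := by positivity
    rcases mul_eq_zero.mp h2 with h | h
    · linarith
    · linarith
  have hkone : k = 1 := by nlinarith [sq_nonneg (k - 1), sq_nonneg (k + 1), hk0]
  rw [hkone]; ring

/-- If the body-centered three-body system (S1) holds on a nonempty open interval,
then the masses `m₂` and `m₃` must be equal. -/
theorem bcos_threeBody_forces_equal_masses (G m₁ m₂ m₃ : ℝ)
    (hG : 0 < G) (hm₁ : 0 < m₁) (hm₂ : 0 < m₂) (hm₃ : 0 < m₃)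
    (a b : ℝ) (hab : a < b) (r₂ r₃ : ℝ → EuclideanSpace ℝ (Fin 3))
    (hd₂ : ∀ t ∈ Set.Ioo a b, DifferentiableAt ℝ r₂ t ∧ DifferentiableAt ℝ (deriv r₂) t)
    (hd₃ : ∀ t ∈ Set.Ioo a b, DifferentiableAt ℝ r₃ t ∧ DifferentiableAt ℝ (deriv r₃) t)
    (hne₂ : ∀ t ∈ Set.Ioo a b, r₂ t ≠ 0)
    (hne₃ : ∀ t ∈ Set.Ioo a b, r₃ t ≠ 0)
    (hne₂₃ : ∀ t ∈ Set.Ioo a b, r₂ t ≠ r₃ t)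
    (hS1a : ∀ t ∈ Set.Ioo a b,
      (0 : EuclideanSpace ℝ (Fin 3))
        = (G * m₂ / ‖r₂ t‖ ^ 3) • r₂ t + (G * m₃ / ‖r₃ t‖ ^ 3) • r₃ t)
    (hS1b : ∀ t ∈ Set.Ioo a b,
      deriv (deriv r₂) t
        = -((G * m₁ / ‖r₂ t‖ ^ 3) • r₂ t)
          + (G * m₃ / ‖r₃ t - r₂ t‖ ^ 3) • (r₃ t - r₂ t))
    (hS1c : ∀ t ∈ Set.Ioo a b,
      deriv (deriv r₃) t
        = -((G * m₁ / ‖r₃ t‖ ^ 3) • r₃ t)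
          + (G * m₂ / ‖r₂ t - r₃ t‖ ^ 3) • (r₂ t - r₃ t)) :
    m₂ = m₃ := by
  have hk0 : (0:ℝ) < Real.sqrt (m₃ / m₂) := Real.sqrt_pos.mpr (by positivity)
  set k : ℝ := Real.sqrt (m₃ / m₂) with hk_def
  have hk2 : k ^ 2 = m₃ / m₂ := Real.sq_sqrt (by positivity)
  have hm₃eq : m₃ = k ^ 2 * m₂ := by rw [hk2]; field_simp
  -- pointwise relation r₃ = -k • r₂
  have hrel : ∀ t ∈ Set.Ioo a b, r₃ t = (-k) • r₂ t := by
    intro t ht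
    have hρ₂ : (0:ℝ) < ‖r₂ t‖ := norm_pos_iff.mpr (hne₂ t ht)
    have hρ₃ : (0:ℝ) < ‖r₃ t‖ := norm_pos_iff.mpr (hne₃ t ht)
    have hα : (0:ℝ) < G * m₂ / ‖r₂ t‖ ^ 3 := by positivity
    have hβ : (0:ℝ) < G * m₃ / ‖r₃ t‖ ^ 3 := by positivity
    set α : ℝ := G * m₂ / ‖r₂ t‖ ^ 3 with hα_def
    set β : ℝ := G * m₃ / ‖r₃ t‖ ^ 3 with hβ_def
    have h2 : β • r₃ t = -(α • r₂ t) :=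
      eq_neg_of_add_eq_zero_right (hS1a t ht).symm
    have h1 : r₃ t = (-(α / β)) • r₂ t := by
      have := congrArg (fun v => β⁻¹ • v) h2
      simpa [smul_smul, hβ.ne', div_eq_inv_mul, mul_comm, neg_div] using this
    have hcpos : 0 < α / β := by positivity
    have hnorm : ‖r₃ t‖ = (α / β) * ‖r₂ t‖ := by
      rw [h1, norm_smul, Real.norm_eq_abs, abs_neg, abs_of_pos hcpos]
    have hcβ : (α / β) * β = α := div_mul_cancel₀ α hβ.ne'
    rw [hβ_def, hα_def] at hcβ
    have hc2 : (α / β) ^ 2 = m₃ / m₂ :=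
      bcos_aux_sq G m₂ m₃ ‖r₂ t‖ ‖r₃ t‖ (α / β) hG hm₂ hm₃ hρ₂ hρ₃ hcpos hnorm hcβ
    have hck : α / β = k := by
      calc α / β = Real.sqrt ((α / β) ^ 2) := (Real.sqrt_sq hcpos.le).symm
        _ = k := by rw [hc2, hk_def]
    rw [h1, hck]
  -- derivative relation on the interval
  have hder1 : ∀ t ∈ Set.Ioo a b, deriv r₃ t = (-k) • deriv r₂ t := by
    intro t ht
    have hev : r₃ =ᶠ[nhds t] (fun s => (-k) • r₂ s) :=
      Filter.eventually_of_mem (isOpen_Ioo.mem_nhds ht) hrel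
    rw [hev.deriv_eq]; exact ((hd₂ t ht).1.hasDerivAt.const_smul (-k)).deriv
  -- choose a point
  set t₀ : ℝ := (a + b) / 2 with ht₀_def
  have ht₀ : t₀ ∈ Set.Ioo a b := ⟨by simp only [ht₀_def]; linarith, by simp only [ht₀_def]; linarith⟩
  have hder2 : deriv (deriv r₃) t₀ = (-k) • deriv (deriv r₂) t₀ := by
    have hev : deriv r₃ =ᶠ[nhds t₀] (fun s => (-k) • deriv r₂ s) :=
      Filter.eventually_of_mem (isOpen_Ioo.mem_nhds ht₀) hder1
    rw [hev.deriv_eq]; exact ((hd₂ t₀ ht₀).2.hasDerivAt.const_smul (-k)).deriv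
  -- work at t₀
  set v : EuclideanSpace ℝ (Fin 3) := r₂ t₀ with hv_def
  have hv : v ≠ 0 := hne₂ t₀ ht₀
  have hρ : (0:ℝ) < ‖v‖ := norm_pos_iff.mpr hv
  have hr₃ : r₃ t₀ = (-k) • v := hrel t₀ ht₀
  have hnorm₃ : ‖r₃ t₀‖ = k * ‖v‖ := by
    rw [hr₃, norm_smul, Real.norm_eq_abs, abs_neg, abs_of_pos hk0]
  have hsub : r₃ t₀ - r₂ t₀ = (-(k+1)) • v := by
    rw [hr₃, show (-(k+1) : ℝ) = -k - 1 by ring, sub_smul]; simp [hv_def]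
  have hsub' : r₂ t₀ - r₃ t₀ = (k+1) • v := by
    rw [hr₃, show (k+1 : ℝ) = 1 - -k by ring, sub_smul]; simp [hv_def]
  have hnormsub : ‖r₃ t₀ - r₂ t₀‖ = (k+1) * ‖v‖ := by
    rw [hsub, norm_smul, Real.norm_eq_abs, abs_neg, abs_of_pos (show (0:ℝ) < k+1 by linarith)]
  have hnormsub' : ‖r₂ t₀ - r₃ t₀‖ = (k+1) * ‖v‖ := by
    rw [hsub', norm_smul, Real.norm_eq_abs, abs_of_pos (show (0:ℝ) < k+1 by linarith)]
  have hb' := hS1b t₀ ht₀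
  have hc' := hS1c t₀ ht₀
  rw [hnormsub, hsub] at hb'
  rw [hnorm₃, hnormsub', hsub', hr₃] at hc'
  simp only [← hv_def] at hb' hc'
  rw [hb', hc'] at hder2
  set ρ : ℝ := ‖v‖ with hρ_def
  -- turn into a scalar equation
  have key : (-(G * m₁ / (k*ρ)^3) * (-k) + (G * m₂ / ((k+1)*ρ)^3) * (k+1)
      - (-k) * (-(G * m₁ / ρ^3) + (G * m₃ / ((k+1)*ρ)^3) * (-(k+1)))) • v = 0 := by
    linear_combination (norm := module) hder2
  have hscal : (-(G * m₁ / (k*ρ)^3) * (-k) + (G * m₂ / ((k+1)*ρ)^3) * (k+1)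
      - (-k) * (-(G * m₁ / ρ^3) + (G * m₃ / ((k+1)*ρ)^3) * (-(k+1)))) = 0 := by
    rcases smul_eq_zero.mp key with h | h
    · exact h
    · exact absurd h hv
  exact bcos_aux_final G m₁ m₂ m₃ k ρ hG hm₁ hm₂ hk0 hρ hm₃eq hscal
end

section
/- Let G > 0 and m₁, m₃ > 0, and set m₂ = m₃. Suppose r₂, r₃ : ℝ → EuclideanSpace ℝ (Fin 3) are twice differentiable on a nonempty open interval I, with r₂ t ≠ 0, r₃ t ≠ 0, r₂ t ≠ r₃ t for all t ∈ I, and suppose the system (S1) holds on I: 0 = (G m₂/‖r₂ t‖³) • r₂ t + (G m₃/‖r₃ t‖³) • r₃ t, r₂'' t = −(G m₁/‖r₂ t‖³) • r₂ t + (G m₃/‖r₃ t − r₂ t‖³) • (r₃ t − r₂ t), and r₃'' t = −(G m₁/‖r₃ t‖³) • r₃ t + (G m₂/‖r₂ t − r₃ t‖³) • (r₂ t − r₃ t). Then for all t ∈ I: r₂ t = −r₃ t, ‖r₂ t‖ = ‖r₃ t‖, and r₂'' t = −r₃'' t = (G (m₁ + m₃/4) / ‖r₃ t‖³) • r₃ t.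 -/
open Set

/-- When `m₂ = m₃`, the body-centered three-body system (S1) forces the antipodal
configuration `r₂ = -r₃`, `‖r₂‖ = ‖r₃‖`, and the modified Kepler equation
`r₂'' = -r₃'' = (G(m₁ + m₃/4)/‖r₃‖³) • r₃`. -/
theorem bcos_threeBody_equal_masses_antipodal (G m₁ m₂ m₃ : ℝ)
    (hG : 0 < G) (hm₁ : 0 < m₁) (hm₃ : 0 < m₃) (hm₂₃ : m₂ = m₃)
    (a b : ℝ) (hab : a < b) (r₂ r₃ : ℝ → EuclideanSpace ℝ (Fin 3))
    (hd₂ : ∀ t ∈ Set.Ioo a b, DifferentiableAt ℝ r₂ t ∧ DifferentiableAt ℝ (deriv r₂) t)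
    (hd₃ : ∀ t ∈ Set.Ioo a b, DifferentiableAt ℝ r₃ t ∧ DifferentiableAt ℝ (deriv r₃) t)
    (hne₂ : ∀ t ∈ Set.Ioo a b, r₂ t ≠ 0)
    (hne₃ : ∀ t ∈ Set.Ioo a b, r₃ t ≠ 0)
    (hne₂₃ : ∀ t ∈ Set.Ioo a b, r₂ t ≠ r₃ t)
    (hS1a : ∀ t ∈ Set.Ioo a b,
      (0 : EuclideanSpace ℝ (Fin 3))
        = (G * m₂ / ‖r₂ t‖ ^ 3) • r₂ t + (G * m₃ / ‖r₃ t‖ ^ 3) • r₃ t)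
    (hS1b : ∀ t ∈ Set.Ioo a b,
      deriv (deriv r₂) t
        = -((G * m₁ / ‖r₂ t‖ ^ 3) • r₂ t)
          + (G * m₃ / ‖r₃ t - r₂ t‖ ^ 3) • (r₃ t - r₂ t))
    (hS1c : ∀ t ∈ Set.Ioo a b,
      deriv (deriv r₃) t
        = -((G * m₁ / ‖r₃ t‖ ^ 3) • r₃ t)
          + (G * m₂ / ‖r₂ t - r₃ t‖ ^ 3) • (r₂ t - r₃ t)) :
    ∀ t ∈ Set.Ioo a b,
      r₂ t = -(r₃ t) ∧ ‖r₂ t‖ = ‖r₃ t‖ ∧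
      deriv (deriv r₂) t = (G * (m₁ + m₃ / 4) / ‖r₃ t‖ ^ 3) • r₃ t ∧
      deriv (deriv r₃) t = -((G * (m₁ + m₃ / 4) / ‖r₃ t‖ ^ 3) • r₃ t) := by
  intro t ht
  have hm : m₂ = m₃ := hm₂₃
  have h2 : (0:ℝ) < ‖r₂ t‖ := norm_pos_iff.mpr (hne₂ t ht)
  have h3 : (0:ℝ) < ‖r₃ t‖ := norm_pos_iff.mpr (hne₃ t ht)
  have hGm : (0:ℝ) < G * m₃ := mul_pos hG hm₃
  have ha := hS1a t ht
  rw [hm] at ha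
  have heq : (G * m₃ / ‖r₂ t‖ ^ 3) • r₂ t = -((G * m₃ / ‖r₃ t‖ ^ 3) • r₃ t) := by
    linear_combination (norm := module) ha.symm
  have hn : G * m₃ / ‖r₂ t‖ ^ 2 = G * m₃ / ‖r₃ t‖ ^ 2 := by
    have h := congrArg norm heq
    rw [norm_neg, norm_smul, norm_smul,
      Real.norm_of_nonneg (by positivity), Real.norm_of_nonneg (by positivity)] at h
    have e2 : G * m₃ / ‖r₂ t‖ ^ 3 * ‖r₂ t‖ = G * m₃ / ‖r₂ t‖ ^ 2 := by
      field_simp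
    have e3 : G * m₃ / ‖r₃ t‖ ^ 3 * ‖r₃ t‖ = G * m₃ / ‖r₃ t‖ ^ 2 := by
      field_simp
    rw [e2, e3] at h
    exact h
  have hsq : ‖r₂ t‖ ^ 2 = ‖r₃ t‖ ^ 2 := by
    rw [div_eq_div_iff (by positivity) (by positivity)] at hn
    have := mul_left_cancel₀ hGm.ne' hn
    linarith
  have hnorm : ‖r₂ t‖ = ‖r₃ t‖ := by
    nlinarith [sq_nonneg (‖r₂ t‖ - ‖r₃ t‖), sq_nonneg (‖r₂ t‖ + ‖r₃ t‖)]
  have hanti : r₂ t = -(r₃ t) := by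
    rw [hnorm] at heq
    have hc : (G * m₃ / ‖r₃ t‖ ^ 3) ≠ 0 := by positivity
    refine smul_right_injective (EuclideanSpace ℝ (Fin 3)) hc ?_
    show (G * m₃ / ‖r₃ t‖ ^ 3) • r₂ t = (G * m₃ / ‖r₃ t‖ ^ 3) • (-(r₃ t))
    rw [heq]; module
  refine ⟨hanti, hnorm, ?_, ?_⟩
  · have hb := hS1b t ht
    have hsub : r₃ t - r₂ t = (2:ℝ) • r₃ t := by rw [hanti]; module
    rw [hsub, hanti, norm_neg, norm_smul, Real.norm_ofNat] at hb
    rw [hb]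
    match_scalars
    field_simp
    ring
  · have hc := hS1c t ht
    rw [hm] at hc
    have hsub : r₂ t - r₃ t = (-2:ℝ) • r₃ t := by rw [hanti]; module
    rw [hsub, norm_smul] at hc
    rw [show ‖(-2:ℝ)‖ = 2 by norm_num] at hc
    rw [hc]
    match_scalars
    field_simp
    ring
end

section
/- Let N ≥ 2, G > 0, and m : Fin N → ℝ with m i > 0 for all i. Let t₀ ∈ ℝ, and for 2 ≤ k ≤ N let initial values s_k⁰ ∈ EuclideanSpace ℝ (Fin 3) and s_k¹ ∈ EuclideanSpace ℝ (Fin 3) be given with s_k⁰ ≠ 0 for all k and s_k⁰ ≠ s_j⁰ for all k ≠ j. Then there exists ε > 0 and twice continuously differentiable functions s_k : ℝ → EuclideanSpace ℝ (Fin 3) on (t₀ − ε, t₀ + ε), 2 ≤ k ≤ N, with s_k t₀ = s_k⁰, s_k' t₀ = s_k¹, with s_k t ≠ 0 and s_k t ≠ s_j t (k ≠ j) on the interval, satisfying for all t in the interval and all 2 ≤ k ≤ N: s_k'' t = G • Σ_{i=2}^{N} (m i / ‖s_i t‖³) • (−s_i t) − G • Σ_{i ≠ k, 1 ≤ i ≤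 N} (m i / ‖s_i t − s_k t‖³) • (s_i t − s_k t), where s_1 t is defined to be 0. -/
open Set Finset

namespace RS1Aux

noncomputable section

abbrev E3 := EuclideanSpace ℝ (Fin 3)

variable {N : ℕ}

/-- `shat z p i` is `p i` except that the component `z` is forced to be `0`. -/
def shat (z : Fin N) (p : Fin N → E3) (i : Fin N) : E3 := if i = z then 0 else p i

/-- The acceleration field of the RS1 system. -/
def acc (G : ℝ) (m : Fin N → ℝ) (z : Fin N) (p : Fin N → E3) (k : Fin N) : E3 :=
  if k = z then 0 else
    G • (∑ i ∈ Finset.univ.filter (fun i => i ≠ z),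
          (m i / ‖shat z p i‖ ^ 3) • (-(shat z p i)))
      - G • (∑ i ∈ Finset.univ.filter (fun i => i ≠ k),
          (m i / ‖shat z p i - shat z p k‖ ^ 3) • (shat z p i - shat z p k))

/-- The first-order vector field on phase space. -/
def vf (G : ℝ) (m : Fin N → ℝ) (z : Fin N) (x : (Fin N → E3) × (Fin N → E3)) :
    (Fin N → E3) × (Fin N → E3) :=
  (x.2, acc G m z x.1)

/-- Admissible configurations. -/
def Good (z : Fin N) (p : Fin N → E3) : Prop :=
  (∀ k, k ≠ z → p k ≠ 0) ∧ (∀ k j, k ≠ z → j ≠ z → k ≠ j → p k ≠ p j)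

lemma contDiff_shat (z i : Fin N) : ContDiff ℝ 1 (fun p : Fin N → E3 => shat z p i) := by
  unfold shat
  by_cases hi : i = z
  · simpa [hi] using contDiff_const
  · simp only [hi, if_false]
    exact
      (ContinuousLinearMap.proj (R := ℝ) (φ := fun _ : Fin N => E3) i).contDiff

lemma aux_cd {Y : Type*} [NormedAddCommGroup Y] [NormedSpace ℝ Y]
    (c : ℝ) {f g : Y → E3} {p : Y} (hf : ContDiffAt ℝ 1 f p) (hg : ContDiffAt ℝ 1 g p)
    (hne : f p ≠ 0) : ContDiffAt ℝ 1 (fun q => (c / ‖f q‖ ^ 3) • g q) p :=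
  (contDiffAt_const.div ((hf.norm ℝ hne).pow 3)
    (pow_ne_zero _ (norm_ne_zero_iff.mpr hne))).smul hg

lemma contDiffAt_acc (G : ℝ) (m : Fin N → ℝ) (z : Fin N) {p : Fin N → E3}
    (hp : Good z p) : ContDiffAt ℝ 1 (acc G m z) p := by
  rw [contDiffAt_pi]
  intro k
  by_cases hk : k = z
  · simpa [acc, hk] using (contDiffAt_const (c := (0 : E3)))
  · have h1 : ContDiffAt ℝ 1 (fun q : Fin N → E3 =>
        ∑ i ∈ Finset.univ.filter (fun i => i ≠ z),
          (m i / ‖shat z q i‖ ^ 3) • (-(shat z q i))) p := by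
      refine ContDiffAt.sum fun i hi => ?_
      rw [Finset.mem_filter] at hi
      refine aux_cd _ (contDiff_shat z i).contDiffAt (contDiff_shat z i).contDiffAt.neg ?_
      simpa [shat, hi.2] using hp.1 i hi.2
    have h2 : ContDiffAt ℝ 1 (fun q : Fin N → E3 =>
        ∑ i ∈ Finset.univ.filter (fun i => i ≠ k),
          (m i / ‖shat z q i - shat z q k‖ ^ 3) • (shat z q i - shat z q k)) p := by
      refine ContDiffAt.sum fun i hi => ?_
      rw [Finset.mem_filter] at hi
      have hcd : ContDiffAt ℝ 1 (fun q : Fin N → E3 => shat z q i - shat z q k) p :=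
        (contDiff_shat z i).contDiffAt.sub (contDiff_shat z k).contDiffAt
      refine aux_cd _ hcd hcd ?_
      by_cases hiz : i = z
      · simpa [shat, hiz, hk, sub_eq_zero, eq_comm] using hp.1 k hk
      · simp only [shat, if_neg hiz, if_neg hk, sub_ne_zero]
        exact hp.2 i k hiz hk hi.2
    have h := (h1.const_smul G).sub (h2.const_smul G)
    simpa [acc, hk] using h

lemma contDiffAt_vf (G : ℝ) (m : Fin N → ℝ) (z : Fin N)
    {x : (Fin N → E3) × (Fin N → E3)} (hx : Good z x.1) :
    ContDiffAt ℝ 1 (vf G m z) x :=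
  (contDiff_snd.contDiffAt).prodMk ((contDiffAt_acc G m z hx).comp x contDiff_fst.contDiffAt)

end

end RS1Aux

open RS1Aux in
/-- Local existence for the relative-difference system (RS1): the body with
index `0` plays the role of body 1, so `s 0 ≡ 0` and `s k = r 1 - r k` for
`k ≠ 0`.  Given admissible initial data there is a local twice continuously
differentiable solution of
`s_k'' = G Σ_{i ≠ 0} (m i/‖s i‖³) • (-s i) - G Σ_{i ≠ k} (m i/‖s i - s k‖³) • (s i - s k)`. -/
theorem rs1_wellPosed (N : ℕ) (hN : 2 ≤ N) (G : ℝ) (hG : 0 < G)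
    (m : Fin N → ℝ) (hm : ∀ i, 0 < m i) (t₀ : ℝ)
    (z : Fin N) (hz : (z : ℕ) = 0)
    (s₀ s₁ : Fin N → EuclideanSpace ℝ (Fin 3))
    (h0 : ∀ k, k ≠ z → s₀ k ≠ 0)
    (hdist : ∀ k j, k ≠ z → j ≠ z → k ≠ j → s₀ k ≠ s₀ j) :
    ∃ ε > (0 : ℝ), ∃ s : Fin N → ℝ → EuclideanSpace ℝ (Fin 3),
      (∀ t, s z t = 0) ∧
      (∀ k, ContDiffOn ℝ 2 (s k) (Set.Ioo (t₀ - ε) (t₀ + ε))) ∧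
      (∀ k, k ≠ z → s k t₀ = s₀ k) ∧
      (∀ k, k ≠ z → deriv (s k) t₀ = s₁ k) ∧
      (∀ t ∈ Set.Ioo (t₀ - ε) (t₀ + ε), ∀ k, k ≠ z → s k t ≠ 0) ∧
      (∀ t ∈ Set.Ioo (t₀ - ε) (t₀ + ε), ∀ k j, k ≠ z → j ≠ z → k ≠ j → s k t ≠ s j t) ∧
      (∀ t ∈ Set.Ioo (t₀ - ε) (t₀ + ε), ∀ k, k ≠ z →
        deriv (deriv (s k)) t
          = G • (∑ i ∈ Finset.univ.filter (fun i => i ≠ z),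
              (m i / ‖s i t‖ ^ 3) • (-(s i t)))
            - G • (∑ i ∈ Finset.univ.filter (fun i => i ≠ k),
              (m i / ‖s i t - s k t‖ ^ 3) • (s i t - s k t))) := by
  classical
  have hx₀ : Good z s₀ := ⟨h0, hdist⟩
  obtain ⟨f, hft₀, ε₁, hε₁, hode⟩ :=
    ContDiffAt.exists_forall_mem_closedBall_exists_eq_forall_mem_Ioo_hasDerivAt₀
      (contDiffAt_vf G m z (x := (s₀, s₁)) hx₀) t₀
  have ht₀mem : t₀ ∈ Set.Ioo (t₀ - ε₁) (t₀ + ε₁) := ⟨by linarith, by linarith⟩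
  -- the good configuration persists near `t₀`
  have hev : ∀ᶠ t in nhds t₀, Good z (f t).1 := by
    have hfc : ContinuousAt f t₀ := (hode t₀ ht₀mem).continuousAt
    have h1 : ∀ᶠ t in nhds t₀, ∀ k : Fin N, k ≠ z → (f t).1 k ≠ 0 := by
      rw [Filter.eventually_all]
      intro k
      by_cases hk : k = z
      · exact Filter.Eventually.of_forall fun t h => absurd hk h
      · have hc : ContinuousAt (fun t => (f t).1 k) t₀ :=
          ((continuous_apply k).comp continuous_fst).continuousAt.comp hfc
        have hne : (f t₀).1 k ≠ 0 := by rw [hft₀]; exact h0 k hk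
        filter_upwards [hc.eventually_ne hne] with t h _
        exact h
    have h2 : ∀ᶠ t in nhds t₀, ∀ k j : Fin N,
        k ≠ z → j ≠ z → k ≠ j → (f t).1 k ≠ (f t).1 j := by
      rw [Filter.eventually_all]
      intro k
      rw [Filter.eventually_all]
      intro j
      by_cases hkj : k ≠ z ∧ j ≠ z ∧ k ≠ j
      · obtain ⟨hk, hj, hne⟩ := hkj
        have hc : ContinuousAt (fun t => (f t).1 k - (f t).1 j) t₀ :=
          (((continuous_apply k).comp continuous_fst).continuousAt.comp hfc).sub
            (((continuous_apply j).comp continuous_fst).continuousAt.comp hfc)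
        have hne0 : (f t₀).1 k - (f t₀).1 j ≠ 0 := by
          rw [hft₀]; exact sub_ne_zero.mpr (hdist k j hk hj hne)
        filter_upwards [hc.eventually_ne hne0] with t h _ _ _
        exact sub_ne_zero.mp h
      · exact Filter.Eventually.of_forall fun t hk hj hne => absurd ⟨hk, hj, hne⟩ hkj
    filter_upwards [h1, h2] with t ha hb
    exact ⟨ha, hb⟩
  obtain ⟨δ, hδ, hball⟩ := Metric.eventually_nhds_iff.mp hev
  set ε := min ε₁ δ with hεdef
  have hεpos : 0 < ε := lt_min hε₁ hδ
  have hεle₁ : ε ≤ ε₁ := min_le_left _ _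
  have hεleδ : ε ≤ δ := min_le_right _ _
  set I := Set.Ioo (t₀ - ε) (t₀ + ε) with hIdef
  have hsub : I ⊆ Set.Ioo (t₀ - ε₁) (t₀ + ε₁) :=
    Set.Ioo_subset_Ioo (by linarith) (by linarith)
  have hgood : ∀ t ∈ I, Good z (f t).1 := by
    intro t ht
    refine hball ?_
    rw [Real.dist_eq, abs_sub_lt_iff]
    exact ⟨by linarith [ht.1, ht.2], by linarith [ht.1, ht.2]⟩
  have ht₀I : t₀ ∈ I := ⟨by linarith, by linarith⟩
  have hder : ∀ t ∈ I, HasDerivAt f (vf G m z (f t)) t := fun t ht => hode t (hsub ht)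
  have hdiff : DifferentiableOn ℝ f I := fun t ht =>
    (hder t ht).differentiableAt.differentiableWithinAt
  have hcf : ContinuousOn f I := hdiff.continuousOn
  have hvat : ∀ t ∈ I, ContDiffAt ℝ 1 (vf G m z) (f t) := fun t ht =>
    contDiffAt_vf G m z (hgood t ht)
  have heq : Set.EqOn (deriv f) (fun t => vf G m z (f t)) I := fun t ht => (hder t ht).deriv
  have hI : IsOpen I := isOpen_Ioo
  have hC1 : ContDiffOn ℝ 1 f I := by
    rw [show (1 : WithTop ℕ∞) = 0 + 1 from rfl, contDiffOn_succ_iff_deriv_of_isOpen hI]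
    refine ⟨hdiff, by simp, ?_⟩
    rw [contDiffOn_zero]
    exact ContinuousOn.congr
      (fun t ht => ((hvat t ht).continuousAt.comp_continuousWithinAt (hcf t ht))) heq
  have hvfC1 : ContDiffOn ℝ 1 (fun t => vf G m z (f t)) I := fun t ht =>
    ((hvat t ht).comp t (hC1.contDiffAt (hI.mem_nhds ht))).contDiffWithinAt
  have hC2 : ContDiffOn ℝ 2 f I := by
    rw [show (2 : WithTop ℕ∞) = 1 + 1 from rfl, contDiffOn_succ_iff_deriv_of_isOpen hI]
    exact ⟨hdiff, by simp, hvfC1.congr heq⟩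
  -- the continuous linear projections
  let L : Fin N → ((Fin N → E3) × (Fin N → E3)) →L[ℝ] E3 := fun k =>
    (ContinuousLinearMap.proj k).comp (ContinuousLinearMap.fst ℝ _ _)
  let M : Fin N → ((Fin N → E3) × (Fin N → E3)) →L[ℝ] E3 := fun k =>
    (ContinuousLinearMap.proj k).comp (ContinuousLinearMap.snd ℝ _ _)
  have hLfun : ∀ k, k ≠ z → (fun t => shat z (f t).1 k) = fun t => (L k) (f t) := by
    intro k hk
    funext t
    simp [shat, hk, L]
  refine ⟨ε, hεpos, fun k t => shat z (f t).1 k, ?_, ?_, ?_, ?_, ?_, ?_, ?_⟩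
  · intro t; simp [shat]
  · intro k
    beta_reduce
    by_cases hk : k = z
    · simpa [shat, hk] using contDiffOn_const (c := (0 : E3))
    · rw [hLfun k hk]
      exact (L k).contDiff.comp_contDiffOn hC2
  · intro k hk
    simp [shat, hk, hft₀]
  · intro k hk
    beta_reduce
    have h : HasDerivAt (fun u => (L k) (f u)) ((L k) (vf G m z (f t₀))) t₀ :=
      (L k).hasFDerivAt.comp_hasDerivAt t₀ (hder t₀ ht₀I)
    rw [hLfun k hk]
    rw [h.deriv]
    simp [L, vf, hft₀]
  · intro t ht k hk
    simp only [shat, if_neg hk]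
    exact (hgood t ht).1 k hk
  · intro t ht k j hk hj hkj
    simp only [shat, if_neg hk, if_neg hj]
    exact (hgood t ht).2 k j hk hj hkj
  · intro t ht k hk
    beta_reduce
    have hskd : ∀ τ ∈ I, deriv (fun u => shat z (f u).1 k) τ = (f τ).2 k := by
      intro τ hτ
      have h : HasDerivAt (fun u => (L k) (f u)) ((L k) (vf G m z (f τ))) τ :=
        (L k).hasFDerivAt.comp_hasDerivAt τ (hder τ hτ)
      rw [hLfun k hk, h.deriv]
      simp [L, vf]
    have hev2 : deriv (fun u => shat z (f u).1 k) =ᶠ[nhds t] fun u => (f u).2 k :=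
      Filter.eventually_of_mem (hI.mem_nhds ht) fun τ hτ => hskd τ hτ
    rw [hev2.deriv_eq]
    have h2 : HasDerivAt (fun u => (f u).2 k) ((vf G m z (f t)).2 k) t := by
      exact (M k).hasFDerivAt.comp_hasDerivAt t (hder t ht)
    rw [h2.deriv]
    simp only [vf, acc, if_neg hk]
end

section
/- Let N ≥ 2, G > 0, m : Fin N → ℝ with m i > 0, and let M = Σ_{i} m i. Let r : Fin N → EuclideanSpace ℝ (Fin 3) with r j ≠ r k for all j ≠ k, and define a_j = G • Σ_{i ≠ j} (m i / ‖r i − r j‖³) • (r i − r j). Then Σ_{j < k} m j · m k · ⟪r j − r k, a_j − a_k⟫ = −G · M · Σ_{j < k} m j · m k / ‖r j − r k‖, where ⟪·,·⟫ is the real inner product and the sums run over all pairs 1 ≤ j < k ≤ N. -/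
open Set Finset
open scoped RealInnerProductSpace

lemma pair_sum' {N : ℕ} {α : Type*} [AddCommMonoid α] (g : Fin N → Fin N → α) :
    ∑ j : Fin N, ∑ k ∈ Finset.univ.filter (fun k => j < k), (g j k + g k j)
      = ∑ j : Fin N, ∑ k ∈ Finset.univ.filter (fun k => k ≠ j), g j k := by
  have key : ∀ j k : Fin N,
      ((if j < k then g j k else 0) + if k < j then g j k else 0)
        = if k ≠ j then g j k else 0 := by
    intro j k
    rcases lt_trichotomy j k with h | h | h
    · simp [h, asymm h, h.ne']
    · simp [h]
    · simp [h, asymm h, h.ne]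
  calc ∑ j : Fin N, ∑ k ∈ Finset.univ.filter (fun k => j < k), (g j k + g k j)
      = (∑ j : Fin N, ∑ k : Fin N, if j < k then g j k else 0)
        + (∑ j : Fin N, ∑ k : Fin N, if j < k then g k j else 0) := by
        simp [Finset.sum_filter, Finset.sum_add_distrib]
    _ = (∑ j : Fin N, ∑ k : Fin N, if j < k then g j k else 0)
        + (∑ j : Fin N, ∑ k : Fin N, if k < j then g j k else 0) := by
        rw [Finset.sum_comm (f := fun j k => if j < k then g k j else 0)]
    _ = ∑ j : Fin N, ∑ k : Fin N, if k ≠ j then g j k else 0 := by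
        rw [← Finset.sum_add_distrib]
        refine Finset.sum_congr rfl fun j _ => ?_
        rw [← Finset.sum_add_distrib]
        exact Finset.sum_congr rfl fun k _ => key j k
    _ = ∑ j : Fin N, ∑ k ∈ Finset.univ.filter (fun k => k ≠ j), g j k := by
        simp [Finset.sum_filter]

lemma antisym_sum_zero' {N : ℕ} {E : Type*} [AddCommGroup E] [Module ℝ E]
    (F : Fin N → Fin N → E) (hF : ∀ i j, F i j = -F j i) :
    ∑ j : Fin N, ∑ i ∈ Finset.univ.filter (fun i => i ≠ j), F i j = 0 := by
  set S := ∑ j : Fin N, ∑ i ∈ Finset.univ.filter (fun i => i ≠ j), F i j with hS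
  have h1 : S = ∑ j : Fin N, ∑ i : Fin N, if i ≠ j then F i j else 0 := by
    simp [hS, Finset.sum_filter]
  have step : ∀ i j : Fin N, (if i ≠ j then F i j else 0) = -(if j ≠ i then F j i else 0) := by
    intro i j
    by_cases h : i = j
    · simp [h]
    · simp [h, Ne.symm h, hF i j]
  have h2 : S = -S := by
    calc S = ∑ i : Fin N, ∑ j : Fin N, (if i ≠ j then F i j else 0) := by
          rw [h1, Finset.sum_comm]
      _ = ∑ i : Fin N, ∑ j : Fin N, -(if j ≠ i then F j i else 0) :=
          Finset.sum_congr rfl fun i _ => Finset.sum_congr rfl fun j _ => step i j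
      _ = -∑ i : Fin N, ∑ j : Fin N, (if j ≠ i then F j i else 0) := by simp
      _ = -S := by rw [h1]
  have h3 : (2 : ℝ) • S = 0 := by
    rw [two_smul]; nth_rewrite 1 [h2]; simp
  simpa using (smul_eq_zero.mp h3).resolve_left (by norm_num)

/-- The new constant of motion identity:
`Σ_{j<k} m_j m_k ⟪r_j - r_k, a_j - a_k⟫ = -G M Σ_{j<k} m_j m_k / ‖r_j - r_k‖`. -/
theorem relative_constant_of_motion (N : ℕ) (hN : 2 ≤ N) (G : ℝ) (hG : 0 < G)
    (m : Fin N → ℝ) (hm : ∀ i, 0 < m i)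
    (r : Fin N → EuclideanSpace ℝ (Fin 3))
    (hr : ∀ j k, j ≠ k → r j ≠ r k) :
    ∑ j : Fin N, ∑ k ∈ Finset.univ.filter (fun k => j < k),
        m j * m k * ⟪r j - r k, nbodyAccel N G m r j - nbodyAccel N G m r k⟫
      = -(G * (∑ i, m i) *
          ∑ j : Fin N, ∑ k ∈ Finset.univ.filter (fun k => j < k),
            m j * m k / ‖r j - r k‖) := by
  set a : Fin N → EuclideanSpace ℝ (Fin 3) := nbodyAccel N G m r with ha
  set M : ℝ := ∑ i, m i with hM
  set P : EuclideanSpace ℝ (Fin 3) := ∑ i, m i • r i with hP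
  set F : Fin N → Fin N → EuclideanSpace ℝ (Fin 3) :=
    fun i j => (G * (m i * m j) / ‖r i - r j‖ ^ 3) • (r i - r j) with hF
  -- decomposition of m j • a j
  have hma : ∀ j, m j • a j = ∑ i ∈ Finset.univ.filter (fun i => i ≠ j), F i j := by
    intro j
    rw [ha]
    simp only [nbodyAccel, smul_smul, Finset.smul_sum, hF]
    refine Finset.sum_congr rfl fun i _ => ?_
    congr 1
    ring
  -- antisymmetry of F
  have hFanti : ∀ i j, F i j = -F j i := by
    intro i j
    rw [hF]
    simp only
    rw [show r j - r i = -(r i - r j) from (neg_sub _ _).symm, norm_neg, smul_neg, neg_neg,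
      mul_comm (m j) (m i)]
  -- Newton's third law
  have hthird : ∑ j, m j • a j = 0 := by
    rw [Finset.sum_congr rfl fun j _ => hma j]
    exact antisym_sum_zero' F hFanti
  -- distance nonzero
  have hd : ∀ j k : Fin N, j ≠ k → ‖r j - r k‖ ≠ 0 := fun j k h =>
    norm_ne_zero_iff.mpr (sub_ne_zero.mpr (hr j k h))
  -- virial-type per-pair identity
  set h : Fin N → Fin N → ℝ :=
    fun j i => G * (m i * m j) / ‖r i - r j‖ ^ 3 * ⟪r j, r i - r j⟫ with hh
  have hvir : ∀ j, ⟪r j, m j • a j⟫ = ∑ i ∈ Finset.univ.filter (fun i => i ≠ j), h j i := by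
    intro j
    rw [hma j, inner_sum]
    exact Finset.sum_congr rfl fun i _ => by rw [hF, hh]; simp only; rw [real_inner_smul_right]
  have hpair : ∀ j k : Fin N, j ≠ k →
      h j k + h k j = -(G * (m j * m k / ‖r j - r k‖)) := by
    intro j k hjk
    rw [hh]
    simp only
    have hnorm : ‖r k - r j‖ = ‖r j - r k‖ := norm_sub_rev _ _
    have hip : ⟪r j, r k - r j⟫ + ⟪r k, r j - r k⟫ = -‖r j - r k‖ ^ 2 := by
      simp only [inner_sub_right]
      rw [norm_sub_sq_real, real_inner_self_eq_norm_sq, real_inner_self_eq_norm_sq,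
        real_inner_comm (r k) (r j)]
      ring
    have hd' := hd j k hjk
    calc G * (m k * m j) / ‖r k - r j‖ ^ 3 * ⟪r j, r k - r j⟫
          + G * (m j * m k) / ‖r j - r k‖ ^ 3 * ⟪r k, r j - r k⟫
        = G * (m j * m k) / ‖r j - r k‖ ^ 3 * (⟪r j, r k - r j⟫ + ⟪r k, r j - r k⟫) := by
          rw [hnorm, mul_comm (m k) (m j)]; ring
      _ = G * (m j * m k) / ‖r j - r k‖ ^ 3 * (-‖r j - r k‖ ^ 2) := by rw [hip]
      _ = -(G * (m j * m k / ‖r j - r k‖)) := by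
          field_simp
  -- the per-pair g
  set g : Fin N → Fin N → ℝ := fun j k => m j * m k * ⟪r j - r k, a j⟫ with hg
  have hsplit : ∀ j k : Fin N,
      m j * m k * ⟪r j - r k, a j - a k⟫ = g j k + g k j := by
    intro j k
    rw [hg]
    simp only [inner_sub_right]
    rw [show r k - r j = -(r j - r k) from (neg_sub _ _).symm, inner_neg_left]
    ring
  -- inner sum computation
  have hinner : ∀ j : Fin N,
      ∑ k ∈ Finset.univ.filter (fun k => k ≠ j), g j k
        = ⟪M • r j - P, m j • a j⟫ := by
    intro j
    have e1 : ∀ k, g j k = ⟪m k • (r j - r k), m j • a j⟫ := by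
      intro k
      rw [hg, real_inner_smul_left, real_inner_smul_right]
      ring
    rw [Finset.sum_congr rfl fun k _ => e1 k, ← sum_inner]
    congr 1
    have e2 : ∑ k ∈ Finset.univ.filter (fun k => k ≠ j), m k • (r j - r k)
        = ∑ k : Fin N, m k • (r j - r k) := by
      rw [Finset.sum_filter]
      refine Finset.sum_congr rfl fun k _ => ?_
      by_cases hkj : k = j
      · subst hkj; simp
      · simp [hkj]
    rw [e2, hM, hP]
    simp [smul_sub, Finset.sum_sub_distrib, ← Finset.sum_smul]
  calc ∑ j : Fin N, ∑ k ∈ Finset.univ.filter (fun k => j < k),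
        m j * m k * ⟪r j - r k, a j - a k⟫
      = ∑ j : Fin N, ∑ k ∈ Finset.univ.filter (fun k => j < k), (g j k + g k j) :=
        Finset.sum_congr rfl fun j _ => Finset.sum_congr rfl fun k _ => hsplit j k
    _ = ∑ j : Fin N, ∑ k ∈ Finset.univ.filter (fun k => k ≠ j), g j k := pair_sum' g
    _ = ∑ j : Fin N, ⟪M • r j - P, m j • a j⟫ :=
        Finset.sum_congr rfl fun j _ => hinner j
    _ = ∑ j : Fin N, (M * ⟪r j, m j • a j⟫ - ⟪P, m j • a j⟫) := by
        refine Finset.sum_congr rfl fun j _ => ?_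
        rw [inner_sub_left, real_inner_smul_left]
    _ = M * (∑ j : Fin N, ⟪r j, m j • a j⟫) - ⟪P, ∑ j, m j • a j⟫ := by
        rw [Finset.sum_sub_distrib, Finset.mul_sum, inner_sum]
    _ = M * (∑ j : Fin N, ∑ i ∈ Finset.univ.filter (fun i => i ≠ j), h j i) := by
        rw [hthird, inner_zero_right, sub_zero]
        rw [Finset.sum_congr rfl fun j _ => hvir j]
    _ = M * (∑ j : Fin N, ∑ k ∈ Finset.univ.filter (fun k => j < k), (h j k + h k j)) := by
        rw [pair_sum' h]
    _ = M * (∑ j : Fin N, ∑ k ∈ Finset.univ.filter (fun k => j < k),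
          -(G * (m j * m k / ‖r j - r k‖))) := by
        congr 1
        refine Finset.sum_congr rfl fun j _ => Finset.sum_congr rfl fun k hk => ?_
        exact hpair j k (Finset.mem_filter.mp hk).2.ne
    _ = -(G * M * ∑ j : Fin N, ∑ k ∈ Finset.univ.filter (fun k => j < k),
          m j * m k / ‖r j - r k‖) := by
        simp only [Finset.sum_neg_distrib, ← Finset.mul_sum]
        ring
end

section
/- Let N ≥ 2, G > 0, m : Fin N → ℝ with m i > 0, and let r : Fin N → EuclideanSpace ℝ (Fin 3) with r j ≠ r k for all j ≠ k. Define a_j = G • Σ_{i ≠ j} (m i / ‖r i − r j‖³) • (r i − r j). Then Σ_{j < k} m j · m k · ⟪r j − r k, a_j − a_k⟫ < 0. -/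
open Set Finset
open scoped RealInnerProductSpace

lemma sum_antisymm_eq_zero {N : ℕ} {M : Type*} [AddCommGroup M] [Module ℝ M]
    (g : Fin N → Fin N → M) (hg : ∀ i j, g i j = - g j i) :
    ∑ j : Fin N, ∑ i : Fin N, g i j = 0 := by
  have h : (∑ j : Fin N, ∑ i : Fin N, g i j) = - ∑ j : Fin N, ∑ i : Fin N, g i j := by
    calc ∑ j : Fin N, ∑ i : Fin N, g i j
        = ∑ i : Fin N, ∑ j : Fin N, g i j := Finset.sum_comm
      _ = ∑ i : Fin N, ∑ j : Fin N, -(g j i) :=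
          Finset.sum_congr rfl fun i _ => Finset.sum_congr rfl fun j _ => hg i j
      _ = - ∑ i : Fin N, ∑ j : Fin N, g j i := by simp
      _ = - ∑ j : Fin N, ∑ i : Fin N, g i j := rfl
  have h2 : (2:ℝ) • (∑ j : Fin N, ∑ i : Fin N, g i j) = 0 := by
    rw [two_smul]; nth_rewrite 1 [h]; simp
  exact (smul_eq_zero.mp h2).resolve_left (by norm_num)

/-- The quantity `Σ_{j<k} m_j m_k ⟪r_j - r_k, a_j - a_k⟫` is always negative. -/
theorem relative_constant_of_motion_neg (N : ℕ) (hN : 2 ≤ N) (G : ℝ) (hG : 0 < G)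
    (m : Fin N → ℝ) (hm : ∀ i, 0 < m i)
    (r : Fin N → EuclideanSpace ℝ (Fin 3))
    (hr : ∀ j k, j ≠ k → r j ≠ r k) :
    ∑ j : Fin N, ∑ k ∈ Finset.univ.filter (fun k => j < k),
        m j * m k * ⟪r j - r k, nbodyAccel N G m r j - nbodyAccel N G m r k⟫
      < 0 := by
  set a : Fin N → EuclideanSpace ℝ (Fin 3) := nbodyAccel N G m r with ha
  set g : Fin N → Fin N → EuclideanSpace ℝ (Fin 3) :=
    fun i j => (G * m j * m i / ‖r i - r j‖ ^ 3) • (r i - r j) with hgdef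
  set t : Fin N → Fin N → ℝ :=
    fun i j => (G * m j * m i / ‖r i - r j‖ ^ 3) * ⟪r j, r i - r j⟫ with htdef
  -- m j • a j as a full sum
  have hma : ∀ j, m j • a j = ∑ i : Fin N, g i j := by
    intro j
    rw [ha]
    unfold nbodyAccel
    rw [smul_smul, Finset.smul_sum]
    rw [Finset.sum_subset (Finset.filter_subset _ _)]
    · apply Finset.sum_congr rfl
      intro i _
      rw [hgdef, smul_smul]
      congr 1
      ring
    · intro i _ hi
      simp only [Finset.mem_filter, Finset.mem_univ, true_and, not_not] at hi
      subst hi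
      simp
  -- total force is zero
  have hF : ∑ j : Fin N, m j • a j = 0 := by
    simp_rw [hma]
    apply sum_antisymm_eq_zero
    intro i j
    simp only [hgdef]
    rw [show r j - r i = -(r i - r j) from (neg_sub _ _).symm, smul_neg, neg_neg, norm_neg]
    congr 1
    ring
  -- m j * ⟪r j, a j⟫ as a full sum
  have hta : ∀ j, m j * ⟪r j, a j⟫ = ∑ i : Fin N, t i j := by
    intro j
    rw [ha]
    unfold nbodyAccel
    rw [real_inner_smul_right, inner_sum, Finset.mul_sum, Finset.mul_sum]
    rw [Finset.sum_subset (Finset.filter_subset _ _)]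
    · apply Finset.sum_congr rfl
      intro i _
      rw [htdef, real_inner_smul_right]
      ring
    · intro i _ hi
      simp only [Finset.mem_filter, Finset.mem_univ, true_and, not_not] at hi
      subst hi
      simp
  -- pair value of t
  have hpair : ∀ i j, i ≠ j → t i j + t j i = -(G * m i * m j / ‖r i - r j‖) := by
    intro i j hij
    have hd : r i - r j ≠ 0 := sub_ne_zero.mpr (hr i j hij)
    have hnd : (0:ℝ) < ‖r i - r j‖ := norm_pos_iff.mpr hd
    have hne : ‖r i - r j‖ ≠ 0 := hnd.ne'
    simp only [htdef]
    rw [norm_sub_rev (r j) (r i)]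
    have hXY : (⟪r j, r i - r j⟫:ℝ) - ⟪r i, r i - r j⟫ = -‖r i - r j‖^2 := by
      rw [← inner_sub_left, show r j - r i = -(r i - r j) from (neg_sub _ _).symm,
        inner_neg_left, real_inner_self_eq_norm_sq]
    have hX : (⟪r j, r i - r j⟫:ℝ) = ⟪r i, r i - r j⟫ - ‖r i - r j‖^2 := by linarith
    rw [show r j - r i = -(r i - r j) from (neg_sub _ _).symm, inner_neg_right, hX]
    field_simp
    ring
  have hdiag : ∀ j, t j j = 0 := by
    intro j
    simp [htdef]
  -- T1 < 0
  have hT1 : (∑ j : Fin N, m j * ⟪r j, a j⟫) < 0 := by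
    have hdouble : (∑ j : Fin N, m j * ⟪r j, a j⟫) + (∑ j : Fin N, m j * ⟪r j, a j⟫)
        = ∑ j : Fin N, ∑ i : Fin N, (t i j + t j i) := by
      simp_rw [hta, Finset.sum_add_distrib]
      congr 1
      exact Finset.sum_comm
    have key : ∀ i j : Fin N, t i j + t j i ≤ 0 := by
      intro i j
      by_cases hij : i = j
      · subst hij; rw [hdiag]; norm_num
      · rw [hpair i j hij]
        have : 0 < G * m i * m j / ‖r i - r j‖ :=
          div_pos (mul_pos (mul_pos hG (hm _)) (hm _))
            (norm_pos_iff.mpr (sub_ne_zero.mpr (hr i j hij)))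
        linarith
    have hlt : (∑ j : Fin N, ∑ i : Fin N, (t i j + t j i)) < 0 := by
      have h0 : (0:ℝ) = ∑ j : Fin N, ∑ i : Fin N, (0:ℝ) := by simp
      rw [h0]
      apply Finset.sum_lt_sum
      · intro j _
        simpa using Finset.sum_nonpos fun i (_ : i ∈ Finset.univ) => key i j
      · have h1N : (1:ℕ) < N := hN
        refine ⟨⟨1, h1N⟩, Finset.mem_univ _, ?_⟩
        apply Finset.sum_lt_sum
        · intro i _; exact key i _
        · refine ⟨⟨0, by omega⟩, Finset.mem_univ _, ?_⟩
          have hij : (⟨0, by omega⟩ : Fin N) ≠ ⟨1, h1N⟩ := by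
            simp [Fin.ext_iff]
          rw [hpair _ _ hij]
          have : 0 < G * m ⟨0, by omega⟩ * m ⟨1, h1N⟩ / ‖r ⟨0, by omega⟩ - r ⟨1, h1N⟩‖ :=
            div_pos (mul_pos (mul_pos hG (hm _)) (hm _))
              (norm_pos_iff.mpr (sub_ne_zero.mpr (hr _ _ hij)))
          linarith
    linarith
  -- the pairwise summand as ordered pairs
  set h : Fin N → Fin N → ℝ := fun j k => m j * m k * ⟪r j - r k, a j⟫ with hhdef
  have hhdiag : ∀ j, h j j = 0 := by intro j; simp [hhdef]
  -- Step A : LHS = ∑ j ∑ k, h j k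
  have stepA : (∑ j : Fin N, ∑ k ∈ Finset.univ.filter (fun k => j < k),
        m j * m k * ⟪r j - r k, a j - a k⟫)
      = ∑ j : Fin N, ∑ k : Fin N, h j k := by
    have expand : ∀ j k : Fin N, m j * m k * ⟪r j - r k, a j - a k⟫ = h j k + h k j := by
      intro j k
      simp only [hhdef]
      rw [inner_sub_right]
      rw [show r k - r j = -(r j - r k) from (neg_sub _ _).symm, inner_neg_left]
      ring
    have split : ∀ j : Fin N, (∑ k : Fin N, h j k)
        = (∑ k ∈ Finset.univ.filter (fun k => j < k), h j k)
          + ∑ k ∈ Finset.univ.filter (fun k => k < j), h j k := by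
      intro j
      rw [← Finset.sum_filter_add_sum_filter_not Finset.univ (fun k => j < k) (h j)]
      congr 1
      refine (Finset.sum_subset ?_ ?_).symm
      · intro k hk
        simp only [Finset.mem_filter, Finset.mem_univ, true_and] at hk ⊢
        exact not_lt_of_gt hk
      · intro k hk hk2
        simp only [Finset.mem_filter, Finset.mem_univ, true_and, not_lt] at hk hk2
        rw [le_antisymm hk2 hk, hhdiag]
    have swap : (∑ j : Fin N, ∑ k ∈ Finset.univ.filter (fun k => k < j), h j k)
        = ∑ j : Fin N, ∑ k ∈ Finset.univ.filter (fun k => j < k), h k j := by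
      apply Finset.sum_comm'
      intro x y
      simp
    calc ∑ j : Fin N, ∑ k ∈ Finset.univ.filter (fun k => j < k),
            m j * m k * ⟪r j - r k, a j - a k⟫
        = ∑ j : Fin N, ∑ k ∈ Finset.univ.filter (fun k => j < k), (h j k + h k j) :=
          Finset.sum_congr rfl fun j _ => Finset.sum_congr rfl fun k _ => expand j k
      _ = (∑ j : Fin N, ∑ k ∈ Finset.univ.filter (fun k => j < k), h j k)
          + ∑ j : Fin N, ∑ k ∈ Finset.univ.filter (fun k => j < k), h k j := by
          simp [Finset.sum_add_distrib]
      _ = (∑ j : Fin N, ∑ k ∈ Finset.univ.filter (fun k => j < k), h j k)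
          + ∑ j : Fin N, ∑ k ∈ Finset.univ.filter (fun k => k < j), h j k := by
          rw [swap]
      _ = ∑ j : Fin N, ∑ k : Fin N, h j k := by
          rw [← Finset.sum_add_distrib]
          exact Finset.sum_congr rfl fun j _ => (split j).symm
  -- Step B : ∑ j ∑ k, h j k = (∑ m) * T1
  set R : EuclideanSpace ℝ (Fin 3) := ∑ k : Fin N, m k • r k with hRdef
  have hRj : ∀ j, ⟪R, m j • a j⟫ = ∑ k : Fin N, m j * (m k * ⟪r k, a j⟫) := by
    intro j
    rw [real_inner_smul_right, hRdef, sum_inner, Finset.mul_sum]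
    exact Finset.sum_congr rfl fun k _ => by rw [real_inner_smul_left]
  have innerSum : ∀ j, (∑ k : Fin N, h j k)
      = (∑ i : Fin N, m i) * (m j * ⟪r j, a j⟫) - ⟪R, m j • a j⟫ := by
    intro j
    rw [hRj]
    have : ∀ k : Fin N, h j k = m k * (m j * ⟪r j, a j⟫) - m j * (m k * ⟪r k, a j⟫) := by
      intro k
      simp only [hhdef]
      rw [inner_sub_left]
      ring
    rw [Finset.sum_congr rfl fun k _ => this k, Finset.sum_sub_distrib, ← Finset.sum_mul]
  have stepB : (∑ j : Fin N, ∑ k : Fin N, h j k)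
      = (∑ i : Fin N, m i) * ∑ j : Fin N, m j * ⟪r j, a j⟫ := by
    rw [Finset.sum_congr rfl fun j _ => innerSum j, Finset.sum_sub_distrib,
      ← Finset.mul_sum]
    have : (∑ j : Fin N, ⟪R, m j • a j⟫) = ⟪R, ∑ j : Fin N, m j • a j⟫ :=
      (inner_sum _ _ _).symm
    rw [this, hF, inner_zero_right, sub_zero]
  have hM : 0 < ∑ i : Fin N, m i := by
    apply Finset.sum_pos (fun i _ => hm i)
    exact ⟨⟨0, by omega⟩, Finset.mem_univ _⟩
  rw [stepA, stepB]
  exact mul_neg_of_pos_of_neg hM hT1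
end

section
/- Let N ≥ 2, G > 0, m : Fin N → ℝ with m i > 0, M = Σ_i m i, and let r : Fin N → EuclideanSpace ℝ (Fin 3) with r j ≠ r k for j ≠ k. For 1 ≤ j < k ≤ N define T(j,k) = G · m j · m k · Σ_{i ≠ j, i ≠ k} m i · (⟪r j − r k, r i − r j⟫/‖r i − r j‖³ − ⟪r j − r k, r i − r k⟫/‖r i − r k‖³). Then Σ_{1 ≤ j < k ≤ N} T(j,k) = −G · Σ_{1 ≤ j < k ≤ N} (M − m j − m k) · m j · m k / ‖r j − r k‖. -/
open Set Finset
open scoped RealInnerProductSpace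

/-- The sum of the cross terms `T(j,k)` equals
`-G Σ_{j<k} (M - m_j - m_k) m_j m_k / ‖r_j - r_k‖`. -/
theorem crossTerm_sum (N : ℕ) (hN : 2 ≤ N) (G : ℝ) (hG : 0 < G)
    (m : Fin N → ℝ) (hm : ∀ i, 0 < m i)
    (r : Fin N → EuclideanSpace ℝ (Fin 3))
    (hr : ∀ j k, j ≠ k → r j ≠ r k) :
    ∑ j : Fin N, ∑ k ∈ Finset.univ.filter (fun k => j < k),
        (G * m j * m k *
          ∑ i ∈ Finset.univ.filter (fun i => i ≠ j ∧ i ≠ k),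
            m i * (⟪r j - r k, r i - r j⟫ / ‖r i - r j‖ ^ 3
                    - ⟪r j - r k, r i - r k⟫ / ‖r i - r k‖ ^ 3))
      = -(G * ∑ j : Fin N, ∑ k ∈ Finset.univ.filter (fun k => j < k),
            ((∑ i, m i) - m j - m k) * m j * m k / ‖r j - r k‖) := by
  classical
  set f : Fin N → Fin N → Fin N → ℝ := fun j k i =>
    ⟪r j - r k, r i - r j⟫ / ‖r i - r j‖ ^ 3 with hf
  have hsummand : ∀ j k i : Fin N,
      ⟪r j - r k, r i - r j⟫ / ‖r i - r j‖ ^ 3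
        - ⟪r j - r k, r i - r k⟫ / ‖r i - r k‖ ^ 3 = f j k i + f k j i := by
    intro j k i
    simp only [hf]
    rw [show r k - r j = -(r j - r k) from by abel, inner_neg_left]
    ring
  have key : ∀ j k i : Fin N, i ≠ j → f j k i + f i k j = -(1 / ‖r i - r j‖) := by
    intro j k i hij
    have ha : ‖r i - r j‖ ≠ 0 := norm_ne_zero_iff.mpr (sub_ne_zero.mpr (hr i j hij))
    simp only [hf]
    rw [norm_sub_rev (r j) (r i), ← add_div,
      show ⟪r j - r k, r i - r j⟫ + ⟪r i - r k, r j - r i⟫ = -(‖r i - r j‖ ^ 2) from ?_]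
    · field_simp
    · rw [show r j - r i = -(r i - r j) from by abel, inner_neg_right, ← sub_eq_add_neg,
        ← inner_sub_left, show r j - r k - (r i - r k) = -(r i - r j) from by abel,
        inner_neg_left, real_inner_self_eq_norm_sq]
  -- triple-sum machinery
  have tsum : ∀ F : Fin N × Fin N × Fin N → ℝ,
      ∑ t, F t = ∑ j, ∑ k, ∑ i, F (j, k, i) := by
    intro F
    rw [Fintype.sum_prod_type]
    exact Finset.sum_congr rfl fun j _ => Fintype.sum_prod_type _
  have sum_comp : ∀ (F : Fin N × Fin N × Fin N → ℝ)
      (e : Fin N × Fin N × Fin N → Fin N × Fin N × Fin N), Function.Bijective e →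
      ∑ t, F t = ∑ t, F (e t) := by
    intro F e he
    exact (Fintype.sum_bijective e he (fun t => F (e t)) F (fun t => rfl)).symm
  have bij12 : Function.Bijective (fun t : Fin N × Fin N × Fin N => (t.2.1, t.1, t.2.2)) :=
    Function.Involutive.bijective fun t => rfl
  have bij13 : Function.Bijective (fun t : Fin N × Fin N × Fin N => (t.2.2, t.2.1, t.1)) :=
    Function.Involutive.bijective fun t => rfl
  have bijc : Function.Bijective (fun t : Fin N × Fin N × Fin N => (t.2.2, t.1, t.2.1)) :=
    Function.bijective_iff_has_inverse.mpr
      ⟨fun t => (t.2.1, t.2.2, t.1), fun t => rfl, fun t => rfl⟩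
  set a1 : Fin N × Fin N × Fin N → ℝ := fun t =>
    if t.1 < t.2.1 ∧ t.2.2 ≠ t.1 ∧ t.2.2 ≠ t.2.1 then
      m t.1 * m t.2.1 * m t.2.2 * f t.1 t.2.1 t.2.2 else 0 with ha1
  set a2 : Fin N × Fin N × Fin N → ℝ := fun t =>
    if t.1 < t.2.1 ∧ t.2.2 ≠ t.1 ∧ t.2.2 ≠ t.2.1 then
      m t.1 * m t.2.1 * m t.2.2 * f t.2.1 t.1 t.2.2 else 0 with ha2
  set gfun : Fin N × Fin N × Fin N → ℝ := fun t =>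
    if t.1 ≠ t.2.1 ∧ t.2.2 ≠ t.1 ∧ t.2.2 ≠ t.2.1 then
      m t.1 * m t.2.1 * m t.2.2 * f t.1 t.2.1 t.2.2 else 0 with hgfun
  set hfun : Fin N × Fin N × Fin N → ℝ := fun t =>
    if t.1 ≠ t.2.1 ∧ t.2.2 ≠ t.1 ∧ t.2.2 ≠ t.2.1 then
      -(m t.1 * m t.2.1 * m t.2.2 / ‖r t.2.2 - r t.1‖) else 0 with hhfun
  set Kfun : Fin N × Fin N × Fin N → ℝ := fun t =>
    if t.1 ≠ t.2.1 ∧ t.2.2 ≠ t.1 ∧ t.2.2 ≠ t.2.1 then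
      m t.1 * m t.2.1 * m t.2.2 / ‖r t.1 - r t.2.1‖ else 0 with hKfun
  set c1 : Fin N × Fin N × Fin N → ℝ := fun t =>
    if t.1 < t.2.1 ∧ t.2.2 ≠ t.1 ∧ t.2.2 ≠ t.2.1 then
      m t.1 * m t.2.1 * m t.2.2 / ‖r t.1 - r t.2.1‖ else 0 with hc1
  -- LHS as a triple sum
  have eLHS : (∑ j : Fin N, ∑ k ∈ Finset.univ.filter (fun k => j < k),
        (G * m j * m k *
          ∑ i ∈ Finset.univ.filter (fun i => i ≠ j ∧ i ≠ k),
            m i * (⟪r j - r k, r i - r j⟫ / ‖r i - r j‖ ^ 3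
                    - ⟪r j - r k, r i - r k⟫ / ‖r i - r k‖ ^ 3)))
      = G * ∑ t : Fin N × Fin N × Fin N, (a1 t + a2 t) := by
    rw [Finset.mul_sum, tsum]
    apply Finset.sum_congr rfl; intro j _
    rw [Finset.sum_filter]
    apply Finset.sum_congr rfl; intro k _
    by_cases hjk : j < k
    · rw [if_pos hjk, Finset.sum_filter, Finset.mul_sum]
      apply Finset.sum_congr rfl; intro i _
      by_cases hi : i ≠ j ∧ i ≠ k
      · rw [if_pos hi, hsummand]
        simp only [ha1, ha2]
        rw [if_pos ⟨hjk, hi.1, hi.2⟩, if_pos ⟨hjk, hi.1, hi.2⟩]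
        ring
      · rw [if_neg hi]
        simp only [ha1, ha2]
        rw [if_neg (fun h => hi ⟨h.2.1, h.2.2⟩), if_neg (fun h => hi ⟨h.2.1, h.2.2⟩)]
        ring
    · rw [if_neg hjk]
      rw [Finset.sum_eq_zero]
      intro i _
      simp only [ha1, ha2]
      rw [if_neg (fun h => hjk h.1), if_neg (fun h => hjk h.1)]
      ring
  -- RHS as a triple sum
  have hM : ∀ j k : Fin N, j ≠ k →
      (∑ i, m i) - m j - m k = ∑ i ∈ Finset.univ.filter (fun i => i ≠ j ∧ i ≠ k), m i := by
    intro j k hjk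
    have hset : Finset.univ.filter (fun i : Fin N => i ≠ j ∧ i ≠ k)
        = (Finset.univ \ {j, k}) := by
      ext i; simp
    rw [hset, Finset.sum_sdiff_eq_sub (by simp), Finset.sum_pair hjk]
    ring
  have eRHS : (∑ j : Fin N, ∑ k ∈ Finset.univ.filter (fun k => j < k),
        ((∑ i, m i) - m j - m k) * m j * m k / ‖r j - r k‖)
      = ∑ t : Fin N × Fin N × Fin N, c1 t := by
    rw [tsum]
    apply Finset.sum_congr rfl; intro j _
    rw [Finset.sum_filter]
    apply Finset.sum_congr rfl; intro k _
    by_cases hjk : j < k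
    · rw [if_pos hjk, hM j k (ne_of_lt hjk), Finset.sum_mul, Finset.sum_mul, Finset.sum_div,
        Finset.sum_filter]
      apply Finset.sum_congr rfl; intro i _
      by_cases hi : i ≠ j ∧ i ≠ k
      · rw [if_pos hi]
        simp only [hc1]
        rw [if_pos ⟨hjk, hi.1, hi.2⟩]
        ring
      · rw [if_neg hi]
        simp only [hc1]
        rw [if_neg (fun h => hi ⟨h.2.1, h.2.2⟩)]
    · rw [if_neg hjk]
      rw [Finset.sum_eq_zero]
      intro i _
      simp only [hc1]
      rw [if_neg (fun h => hjk h.1)]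
  -- pointwise symmetrization identities
  have epoint1 : ∀ t : Fin N × Fin N × Fin N, a1 t + a2 (t.2.1, t.1, t.2.2) = gfun t := by
    rintro ⟨j, k, i⟩
    simp only [ha1, ha2, hgfun]
    rcases lt_trichotomy j k with h | h | h
    · by_cases hi : i ≠ j ∧ i ≠ k
      · rw [if_pos ⟨h, hi⟩, if_neg (fun hc => absurd hc.1 (asymm h)),
          if_pos ⟨ne_of_lt h, hi⟩]
        ring
      · rw [if_neg (fun hc => hi ⟨hc.2.1, hc.2.2⟩), if_neg (fun hc => hi ⟨hc.2.2, hc.2.1⟩),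
          if_neg (fun hc => hi ⟨hc.2.1, hc.2.2⟩)]
        ring
    · rw [if_neg (fun hc => absurd hc.1 (h ▸ lt_irrefl j)),
        if_neg (fun hc => absurd hc.1 (h ▸ lt_irrefl j)),
        if_neg (fun hc => hc.1 h)]
      ring
    · by_cases hi : i ≠ j ∧ i ≠ k
      · rw [if_neg (fun hc => absurd hc.1 (asymm h)), if_pos ⟨h, hi.2, hi.1⟩,
          if_pos ⟨(ne_of_lt h).symm, hi⟩]
        ring
      · rw [if_neg (fun hc => hi ⟨hc.2.1, hc.2.2⟩), if_neg (fun hc => hi ⟨hc.2.2, hc.2.1⟩),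
          if_neg (fun hc => hi ⟨hc.2.1, hc.2.2⟩)]
        ring
  have epoint2 : ∀ t : Fin N × Fin N × Fin N, gfun t + gfun (t.2.2, t.2.1, t.1) = hfun t := by
    rintro ⟨j, k, i⟩
    simp only [hgfun, hhfun]
    by_cases hc : j ≠ k ∧ i ≠ j ∧ i ≠ k
    · rw [if_pos hc, if_pos ⟨hc.2.2, hc.2.1.symm, hc.1⟩, if_pos hc]
      have hk := key j k i hc.2.1
      linear_combination (m j * m k * m i) * hk
    · rw [if_neg hc, if_neg (fun hs => hc ⟨hs.2.2, hs.2.1.symm, hs.1⟩), if_neg hc]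
      ring
  have epoint3 : ∀ t : Fin N × Fin N × Fin N, c1 t + c1 (t.2.1, t.1, t.2.2) = Kfun t := by
    rintro ⟨j, k, i⟩
    simp only [hc1, hKfun]
    rcases lt_trichotomy j k with h | h | h
    · by_cases hi : i ≠ j ∧ i ≠ k
      · rw [if_pos ⟨h, hi⟩, if_neg (fun hc => absurd hc.1 (asymm h)),
          if_pos ⟨ne_of_lt h, hi⟩]
        ring
      · rw [if_neg (fun hc => hi ⟨hc.2.1, hc.2.2⟩), if_neg (fun hc => hi ⟨hc.2.2, hc.2.1⟩),
          if_neg (fun hc => hi ⟨hc.2.1, hc.2.2⟩)]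
        ring
    · rw [if_neg (fun hc => absurd hc.1 (h ▸ lt_irrefl j)),
        if_neg (fun hc => absurd hc.1 (h ▸ lt_irrefl j)),
        if_neg (fun hc => hc.1 h)]
      ring
    · by_cases hi : i ≠ j ∧ i ≠ k
      · rw [if_neg (fun hc => absurd hc.1 (asymm h)), if_pos ⟨h, hi.2, hi.1⟩,
          if_pos ⟨(ne_of_lt h).symm, hi⟩, norm_sub_rev (r k) (r j)]
        ring
      · rw [if_neg (fun hc => hi ⟨hc.2.1, hc.2.2⟩), if_neg (fun hc => hi ⟨hc.2.2, hc.2.1⟩),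
          if_neg (fun hc => hi ⟨hc.2.1, hc.2.2⟩)]
        ring
  have epoint4 : ∀ t : Fin N × Fin N × Fin N, Kfun (t.2.2, t.1, t.2.1) = -hfun t := by
    rintro ⟨j, k, i⟩
    simp only [hKfun, hhfun]
    by_cases hc : j ≠ k ∧ i ≠ j ∧ i ≠ k
    · rw [if_pos ⟨hc.2.1, hc.2.2.symm, hc.1.symm⟩, if_pos hc]
      ring
    · rw [if_neg (fun hs => hc ⟨hs.2.2.symm, hs.1, hs.2.1.symm⟩), if_neg hc]
      ring
  -- assemble
  have h1 : ∑ t : Fin N × Fin N × Fin N, (a1 t + a2 t) = ∑ t, gfun t := by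
    rw [Finset.sum_add_distrib, sum_comp a2 _ bij12, ← Finset.sum_add_distrib]
    exact Finset.sum_congr rfl fun t _ => epoint1 t
  have h2 : (2 : ℝ) * ∑ t : Fin N × Fin N × Fin N, gfun t = ∑ t, hfun t := by
    rw [two_mul]
    nth_rewrite 2 [sum_comp gfun _ bij13]
    rw [← Finset.sum_add_distrib]
    exact Finset.sum_congr rfl fun t _ => epoint2 t
  have h3 : (2 : ℝ) * ∑ t : Fin N × Fin N × Fin N, c1 t = ∑ t, Kfun t := by
    rw [two_mul]
    nth_rewrite 2 [sum_comp c1 _ bij12]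
    rw [← Finset.sum_add_distrib]
    exact Finset.sum_congr rfl fun t _ => epoint3 t
  have h4 : ∑ t : Fin N × Fin N × Fin N, Kfun t = -∑ t, hfun t := by
    rw [sum_comp Kfun _ bijc, ← Finset.sum_neg_distrib]
    exact Finset.sum_congr rfl fun t _ => epoint4 t
  have h5 : ∑ t : Fin N × Fin N × Fin N, c1 t = -∑ t, gfun t := by
    have := h3
    rw [h4, ← h2] at this
    linarith
  rw [eLHS, eRHS, h1, h5]
  ring
end

section
/- Let N ≥ 2, G > 0, and m : Fin N → ℝ with m i > 0. There is no configuration r : Fin N → EuclideanSpace ℝ (Fin 3) with r i ≠ r j for all i ≠ j such that a_j = a_k for all j, k, where a_j = G • Σ_{i ≠ j} (m i / ‖r i − r j‖³) • (r i − r j). Consequently, the relative system (r_j − r_k)'' = a_j(r) − a_k(r) has no constant (critical point) solutions with pairwise distinct bodies. -/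
open Set Finset
open scoped RealInnerProductSpace

lemma swap_double_sum {M : Type*} [AddCommMonoid M] {N : ℕ} (f : Fin N → Fin N → M) :
    (∑ j : Fin N, ∑ i ∈ Finset.univ.filter (fun i => i ≠ j), f j i)
      = ∑ j : Fin N, ∑ i ∈ Finset.univ.filter (fun i => i ≠ j), f i j := by
  refine Finset.sum_comm' ?_
  intro x y
  simp [ne_comm, and_comm]

lemma antisym_double_sum {E : Type*} [AddCommGroup E] [Module ℝ E] {N : ℕ}
    (f : Fin N → Fin N → E) (hf : ∀ i j, f i j = - f j i) :
    (∑ j : Fin N, ∑ i ∈ Finset.univ.filter (fun i => i ≠ j), f i j) = 0 := by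
  have h := swap_double_sum f
  have h2 : (∑ j : Fin N, ∑ i ∈ Finset.univ.filter (fun i => i ≠ j), f j i)
      = - ∑ j : Fin N, ∑ i ∈ Finset.univ.filter (fun i => i ≠ j), f i j := by
    rw [← Finset.sum_neg_distrib]
    refine Finset.sum_congr rfl fun j _ => ?_
    rw [← Finset.sum_neg_distrib]
    exact Finset.sum_congr rfl fun i _ => by rw [hf j i]
  have hss : (∑ j : Fin N, ∑ i ∈ Finset.univ.filter (fun i => i ≠ j), f i j)
      + ∑ j : Fin N, ∑ i ∈ Finset.univ.filter (fun i => i ≠ j), f i j = 0 := by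
    nth_rewrite 1 [← h, h2]
    simp
  have h3 : (2 : ℝ) • (∑ j : Fin N, ∑ i ∈ Finset.univ.filter (fun i => i ≠ j), f i j) = 0 := by
    rw [two_smul]; exact hss
  rcases smul_eq_zero.mp h3 with h | h
  · norm_num at h
  · exact h

theorem no_config (N : ℕ) (hN : 2 ≤ N) (G : ℝ) (hG : 0 < G)
    (m : Fin N → ℝ) (hm : ∀ i, 0 < m i) :
    ¬ ∃ r : Fin N → EuclideanSpace ℝ (Fin 3),
        (∀ i j, i ≠ j → r i ≠ r j) ∧
        (∀ j k : Fin N, nbodyAccel N G m r j = nbodyAccel N G m r k) := by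
  rintro ⟨r, hdist, heq⟩
  have i0 : Fin N := ⟨0, by omega⟩
  haveI : Nontrivial (Fin N) := ⟨⟨⟨0, by omega⟩, ⟨1, by omega⟩, by simp [Fin.ext_iff]⟩⟩
  set A := nbodyAccel N G m r with hA
  have hnorm : ∀ i j : Fin N, i ≠ j → 0 < ‖r i - r j‖ := fun i j hij => by
    rw [norm_pos_iff, sub_ne_zero]; exact hdist i j hij
  -- Step 1: the total force vanishes by Newton's third law
  have hsum0 : ∑ j : Fin N, m j • A j = 0 := by
    have hexp : ∀ j : Fin N, m j • A j
        = G • ∑ i ∈ Finset.univ.filter (fun i => i ≠ j),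
            ((m i * m j) / ‖r i - r j‖ ^ 3) • (r i - r j) := by
      intro j
      rw [hA, nbodyAccel, smul_comm, Finset.smul_sum]
      congr 1
      refine Finset.sum_congr rfl fun i _ => ?_
      rw [smul_smul]
      congr 1
      ring
    rw [Finset.sum_congr rfl (fun j _ => hexp j), ← Finset.smul_sum]
    rw [antisym_double_sum (fun i j => ((m i * m j) / ‖r i - r j‖ ^ 3) • (r i - r j)) ?_]
    · simp
    · intro i j
      show (m i * m j / ‖r i - r j‖ ^ 3) • (r i - r j)
        = -((m j * m i / ‖r j - r i‖ ^ 3) • (r j - r i))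
      rw [norm_sub_rev (r j) (r i), mul_comm (m j) (m i), ← smul_neg, neg_sub]
  -- hence each acceleration is zero
  have hAc : ∀ j, A j = A i0 := fun j => heq j i0
  have hM : 0 < ∑ j : Fin N, m j :=
    Finset.sum_pos (fun j _ => hm j) ⟨i0, Finset.mem_univ i0⟩
  have hA0 : A i0 = 0 := by
    have hh : (∑ j : Fin N, m j) • A i0 = 0 := by
      rw [Finset.sum_smul, ← hsum0]
      exact Finset.sum_congr rfl fun j _ => by rw [hAc j]
    rcases smul_eq_zero.mp hh with h | h
    · exact absurd h (ne_of_gt hM)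
    · exact h
  have hAzero : ∀ j, A j = 0 := fun j => (hAc j).trans hA0
  -- Step 2: the virial-type double sum
  set g : Fin N → Fin N → ℝ :=
    fun i j => (m i * m j / ‖r i - r j‖ ^ 3) * ⟪r i - r j, r j⟫ with hg
  have hinner0 : ∀ j : Fin N, ∑ i ∈ Finset.univ.filter (fun i => i ≠ j), g i j = 0 := by
    intro j
    have h1 : ⟪A j, r j⟫ = 0 := by rw [hAzero j]; simp
    rw [hA, nbodyAccel, real_inner_smul_left, _root_.sum_inner] at h1
    have h2 : ∑ i ∈ Finset.univ.filter (fun i => i ≠ j),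
        ⟪(m i / ‖r i - r j‖ ^ 3) • (r i - r j), r j⟫ = 0 :=
      (mul_eq_zero.mp h1).resolve_left (ne_of_gt hG)
    calc ∑ i ∈ Finset.univ.filter (fun i => i ≠ j), g i j
        = m j * ∑ i ∈ Finset.univ.filter (fun i => i ≠ j),
            ⟪(m i / ‖r i - r j‖ ^ 3) • (r i - r j), r j⟫ := by
          rw [Finset.mul_sum]
          refine Finset.sum_congr rfl fun i _ => ?_
          simp only [hg, real_inner_smul_left]
          ring
      _ = 0 := by rw [h2, mul_zero]
  have hS0 : (∑ j : Fin N, ∑ i ∈ Finset.univ.filter (fun i => i ≠ j), g i j) = 0 := by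
    rw [Finset.sum_congr rfl (fun j _ => hinner0 j)]; simp
  have hpair : ∀ i j : Fin N, i ≠ j → g i j + g j i = - (m i * m j / ‖r i - r j‖) := by
    intro i j hij
    have hn := hnorm i j hij
    have hji : r j - r i = -(r i - r j) := by abel
    simp only [hg, hji, norm_neg, inner_neg_left]
    have key : ⟪r i - r j, r j⟫ - ⟪r i - r j, r i⟫ = -(‖r i - r j‖ ^ 2) := by
      rw [← inner_sub_right, hji, inner_neg_right, real_inner_self_eq_norm_sq]
    have hrw : m i * m j / ‖r i - r j‖ ^ 3 * ⟪r i - r j, r j⟫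
        + m j * m i / ‖r i - r j‖ ^ 3 * -⟪r i - r j, r i⟫
        = m i * m j / ‖r i - r j‖ ^ 3 * (⟪r i - r j, r j⟫ - ⟪r i - r j, r i⟫) := by ring
    rw [hrw, key]
    field_simp
  have hneg : (∑ j : Fin N, ∑ i ∈ Finset.univ.filter (fun i => i ≠ j), (g i j + g j i)) < 0 := by
    refine Finset.sum_neg (fun j _ => ?_) Finset.univ_nonempty
    refine Finset.sum_neg (fun i hi => ?_) ?_
    · have hij : i ≠ j := (Finset.mem_filter.mp hi).2
      rw [hpair i j hij]
      have h1 := hnorm i j hij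
      have h2 := hm i; have h3 := hm j
      have : 0 < m i * m j / ‖r i - r j‖ := by positivity
      linarith
    · obtain ⟨i, hij⟩ := exists_ne j
      exact ⟨i, Finset.mem_filter.mpr ⟨Finset.mem_univ i, hij⟩⟩
  have hsplit : (∑ j : Fin N, ∑ i ∈ Finset.univ.filter (fun i => i ≠ j), (g i j + g j i))
      = (∑ j : Fin N, ∑ i ∈ Finset.univ.filter (fun i => i ≠ j), g i j)
        + ∑ j : Fin N, ∑ i ∈ Finset.univ.filter (fun i => i ≠ j), g j i := by
    rw [← Finset.sum_add_distrib]
    exact Finset.sum_congr rfl fun j _ => by rw [← Finset.sum_add_distrib]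
  rw [hsplit, swap_double_sum g, hS0] at hneg
  simp at hneg

/-- There is no configuration of pairwise distinct bodies in which all the
Newtonian accelerations coincide; consequently the relative system
`(r_j - r_k)'' = a_j - a_k` has no constant (critical point) solutions. -/
theorem relativeSystem_no_critical_points (N : ℕ) (hN : 2 ≤ N) (G : ℝ) (hG : 0 < G)
    (m : Fin N → ℝ) (hm : ∀ i, 0 < m i) :
    (¬ ∃ r : Fin N → EuclideanSpace ℝ (Fin 3),
        (∀ i j, i ≠ j → r i ≠ r j) ∧
        (∀ j k : Fin N, nbodyAccel N G m r j = nbodyAccel N G m r k)) ∧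
    (∀ (a b : ℝ), a < b →
      ∀ r : Fin N → ℝ → EuclideanSpace ℝ (Fin 3),
        (∀ t ∈ Set.Icc a b, ∀ i j, i ≠ j → r i t ≠ r j t) →
        (∀ j k : Fin N, ∀ t ∈ Set.Icc a b,
          deriv (deriv (fun s => r j s - r k s)) t
            = nbodyAccel N G m (fun i => r i t) j - nbodyAccel N G m (fun i => r i t) k) →
        ¬ (∀ j k : Fin N, ∃ v : EuclideanSpace ℝ (Fin 3),
            ∀ t ∈ Set.Icc a b, r j t - r k t = v)) := by
  refine ⟨no_config N hN G hG m hm, ?_⟩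
  intro a b hab r hdist hode hconst
  set t0 : ℝ := (a + b) / 2 with ht0
  have ht0mem : t0 ∈ Set.Ioo a b := ⟨by simp only [ht0]; linarith, by simp only [ht0]; linarith⟩
  have ht0Icc : t0 ∈ Set.Icc a b := Set.mem_Icc_of_Ioo ht0mem
  have hIoo : Set.Ioo a b ∈ nhds t0 := Ioo_mem_nhds ht0mem.1 ht0mem.2
  -- second derivatives of the constant differences vanish at t0
  have hzero : ∀ j k : Fin N, deriv (deriv (fun s => r j s - r k s)) t0 = 0 := by
    intro j k
    obtain ⟨v, hv⟩ := hconst j k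
    have hd1 : ∀ t ∈ Set.Ioo a b, deriv (fun s => r j s - r k s) t = 0 := by
      intro t ht
      have hnb : Set.Ioo a b ∈ nhds t := Ioo_mem_nhds ht.1 ht.2
      have heq : (fun s => r j s - r k s) =ᶠ[nhds t] fun _ => v :=
        Filter.eventually_of_mem hnb fun s hs => hv s (Set.mem_Icc_of_Ioo hs)
      rw [heq.deriv_eq, deriv_const]
    have heq2 : deriv (fun s => r j s - r k s) =ᶠ[nhds t0] fun _ => (0 : EuclideanSpace ℝ (Fin 3)) :=
      Filter.eventually_of_mem hIoo fun s hs => hd1 s hs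
    rw [heq2.deriv_eq, deriv_const]
  have hacc : ∀ j k : Fin N,
      nbodyAccel N G m (fun i => r i t0) j = nbodyAccel N G m (fun i => r i t0) k := by
    intro j k
    have := hode j k t0 ht0Icc
    rw [hzero j k] at this
    exact (sub_eq_zero.mp this.symm)
  exact no_config N hN G hG m hm ⟨fun i => r i t0, hdist t0 ht0Icc, hacc⟩
end

section
/- Let N ≥ 2, G > 0, m : Fin N → ℝ with m i > 0, and let r : Fin N → EuclideanSpace ℝ (Fin 3) with r i ≠ r j for i ≠ j. Define a_j = G • Σ_{i ≠ j} (m i / ‖r i − r j‖³) • (r i − r j). Then there exists a pair of indices j < k such that a_j ≠ a_k. In particular, along any solution of the relative system on [a,b], for each t ∈ [a,b] there exists a pair (j,k), j < k, with (r_j(t) − r_k(t))'' ≠ 0. -/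
open Set Finset
open scoped RealInnerProductSpace

lemma accel_inner_nonpos (N : ℕ) (G : ℝ) (hG : 0 < G) (m : Fin N → ℝ) (hm : ∀ i, 0 < m i)
    (r : Fin N → EuclideanSpace ℝ (Fin 3)) (v : EuclideanSpace ℝ (Fin 3)) (j : Fin N)
    (hmax : ∀ i, ⟪r i, v⟫ ≤ ⟪r j, v⟫) :
    ⟪nbodyAccel N G m r j, v⟫ ≤ 0 := by
  unfold nbodyAccel
  rw [real_inner_smul_left, sum_inner]
  refine mul_nonpos_of_nonneg_of_nonpos hG.le (Finset.sum_nonpos fun i hi => ?_)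
  rw [real_inner_smul_left]
  refine mul_nonpos_of_nonneg_of_nonpos (div_nonneg (hm i).le (by positivity)) ?_
  rw [inner_sub_left]
  linarith [hmax i]

lemma accel_inner_neg (N : ℕ) (hN : 2 ≤ N) (G : ℝ) (hG : 0 < G)
    (m : Fin N → ℝ) (hm : ∀ i, 0 < m i)
    (r : Fin N → EuclideanSpace ℝ (Fin 3))
    (hr : ∀ i j, i ≠ j → r i ≠ r j)
    (j : Fin N) (hmax : ∀ i, ‖r i‖ ≤ ‖r j‖) :
    ⟪nbodyAccel N G m r j, r j⟫ < 0 := by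
  unfold nbodyAccel
  rw [real_inner_smul_left, sum_inner]
  refine mul_neg_of_pos_of_neg hG ?_
  have hne : (Finset.univ.filter (fun i => i ≠ j)).Nonempty := by
    haveI : Nontrivial (Fin N) := Fin.nontrivial_iff_two_le.mpr hN
    obtain ⟨i, hi⟩ := exists_ne j
    exact ⟨i, Finset.mem_filter.mpr ⟨Finset.mem_univ _, hi⟩⟩
  refine Finset.sum_neg (fun i hi => ?_) hne
  rw [Finset.mem_filter] at hi
  have hij : r i ≠ r j := hr i j hi.2
  have hd : 0 < ‖r i - r j‖ := by
    rw [norm_pos_iff]; exact sub_ne_zero_of_ne hij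
  rw [real_inner_smul_left]
  refine mul_neg_of_pos_of_neg (div_pos (hm i) (by positivity)) ?_
  have h1 : ‖r i‖ ^ 2 = ‖r j‖ ^ 2 + 2 * ⟪r j, r i - r j⟫ + ‖r i - r j‖ ^ 2 := by
    have h := norm_add_sq_real (r j) (r i - r j)
    simpa using h
  have h2 : ‖r i‖ ^ 2 ≤ ‖r j‖ ^ 2 := by
    have := hmax i
    nlinarith [norm_nonneg (r i), norm_nonneg (r j)]
  have hd2 : 0 < ‖r i - r j‖ ^ 2 := pow_pos hd 2
  rw [real_inner_comm]
  linarith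

lemma exists_accel_ne (N : ℕ) (hN : 2 ≤ N) (G : ℝ) (hG : 0 < G)
    (m : Fin N → ℝ) (hm : ∀ i, 0 < m i)
    (r : Fin N → EuclideanSpace ℝ (Fin 3))
    (hr : ∀ i j, i ≠ j → r i ≠ r j) :
    ∃ j k : Fin N, j < k ∧ nbodyAccel N G m r j ≠ nbodyAccel N G m r k := by
  by_contra hcon
  push_neg at hcon
  have aeq : ∀ j k : Fin N, nbodyAccel N G m r j = nbodyAccel N G m r k := by
    intro j k
    rcases lt_trichotomy j k with h | h | h
    · exact hcon j k h
    · rw [h]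
    · exact (hcon k j h).symm
  have hNpos : 0 < N := by omega
  set z : Fin N := ⟨0, hNpos⟩ with hz
  set A := nbodyAccel N G m r z with hA
  obtain ⟨j0, -, hj0⟩ := Finset.exists_max_image Finset.univ (fun i => ⟪r i, A⟫)
    ⟨z, Finset.mem_univ z⟩
  have h1 : ⟪A, A⟫ ≤ 0 := by
    have h := accel_inner_nonpos N G hG m hm r A j0 (fun i => hj0 i (Finset.mem_univ i))
    rwa [aeq j0 z, ← hA] at h
  have hA0 : A = 0 := by
    have h0 : ⟪A, A⟫ = 0 := le_antisymm h1 real_inner_self_nonneg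
    exact inner_self_eq_zero.mp h0
  obtain ⟨j1, -, hj1⟩ := Finset.exists_max_image Finset.univ (fun i => ‖r i‖)
    ⟨z, Finset.mem_univ z⟩
  have h2 := accel_inner_neg N hN G hG m hm r hr j1 (fun i => hj1 i (Finset.mem_univ i))
  rw [aeq j1 z, ← hA, hA0] at h2
  simp at h2

/-- For pairwise distinct bodies there is always a pair `j < k` with
`a_j ≠ a_k`; in particular, along any solution of the relative system, for each
time `t` there is a pair `(j,k)` with `(r_j(t) - r_k(t))'' ≠ 0`. -/
theorem exists_pair_accel_ne (N : ℕ) (hN : 2 ≤ N) (G : ℝ) (hG : 0 < G)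
    (m : Fin N → ℝ) (hm : ∀ i, 0 < m i)
    (r : Fin N → EuclideanSpace ℝ (Fin 3))
    (hr : ∀ i j, i ≠ j → r i ≠ r j) :
    (∃ j k : Fin N, j < k ∧ nbodyAccel N G m r j ≠ nbodyAccel N G m r k) ∧
    (∀ (a b : ℝ) (rf : Fin N → ℝ → EuclideanSpace ℝ (Fin 3)),
      (∀ t ∈ Set.Icc a b, ∀ i j, i ≠ j → rf i t ≠ rf j t) →
      (∀ j k : Fin N, ∀ t ∈ Set.Icc a b,
        deriv (deriv (fun s => rf j s - rf k s)) t
          = nbodyAccel N G m (fun i => rf i t) j - nbodyAccel N G m (fun i => rf i t) k) →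
      ∀ t ∈ Set.Icc a b, ∃ j k : Fin N, j < k ∧
        deriv (deriv (fun s => rf j s - rf k s)) t ≠ 0) := by
  refine ⟨exists_accel_ne N hN G hG m hm r hr, ?_⟩
  intro a b rf hdist hderiv t ht
  obtain ⟨j, k, hjk, hne⟩ := exists_accel_ne N hN G hG m hm (fun i => rf i t) (hdist t ht)
  exact ⟨j, k, hjk, by rw [hderiv j k t ht]; exact sub_ne_zero_of_ne hne⟩
end

section
/- Let N ≥ 2, G > 0, m : Fin N → ℝ with m i > 0, and let r : Fin N → EuclideanSpace ℝ (Fin 3) with r i ≠ r j for i ≠ j. Define a_j = G • Σ_{i ≠ j} (m i / ‖r i − r j‖³) • (r i − r j). Then there exists a pair of indices j < k such that ⟪r j − r k, a_j − a_k⟫ ≠ 0; that is, along any solution of the relative system, for each time t there is a pair (j,k) for which r_j(t) − r_k(t) is not orthogonal to (r_j(t) − r_k(t))''. -/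
open Set Finset
open scoped RealInnerProductSpace

lemma key_pair (N : ℕ) (hN : 2 ≤ N) (G : ℝ) (hG : 0 < G)
    (m : Fin N → ℝ) (hm : ∀ i, 0 < m i)
    (r : Fin N → EuclideanSpace ℝ (Fin 3))
    (hr : ∀ i j, i ≠ j → r i ≠ r j) :
    ∃ j k : Fin N, j < k ∧
      ⟪r j - r k, nbodyAccel N G m r j - nbodyAccel N G m r k⟫ ≠ 0 := by
  by_contra hcon
  push_neg at hcon
  set a : Fin N → EuclideanSpace ℝ (Fin 3) := nbodyAccel N G m r with ha
  set F : Fin N → Fin N → EuclideanSpace ℝ (Fin 3) :=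
    fun j i => if i = j then (0 : EuclideanSpace ℝ (Fin 3))
      else ((G * (m i * m j)) / ‖r i - r j‖ ^ 3) • (r i - r j) with hFdef
  have hF : ∀ j, m j • a j = ∑ i, F j i := by
    intro j
    rw [ha]
    show m j • (G • ∑ i ∈ Finset.univ.filter (fun i => i ≠ j),
        (m i / ‖r i - r j‖ ^ 3) • (r i - r j)) = _
    rw [smul_smul, Finset.smul_sum, Finset.sum_filter]
    refine Finset.sum_congr rfl fun i _ => ?_
    by_cases h : i = j
    · simp [hFdef, h]
    · rw [hFdef]
      simp only [if_pos h, if_neg h]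
      rw [smul_smul]
      congr 1
      ring
  have hFanti : ∀ j i, F i j = - F j i := by
    intro j i
    by_cases h : i = j
    · simp [hFdef, h, eq_comm]
    · rw [hFdef]
      simp only [if_neg h, if_neg (Ne.symm h)]
      rw [norm_sub_rev, ← smul_neg, neg_sub]
      congr 1
      ring
  -- total momentum vanishes
  have hmom : ∑ j, m j • a j = 0 := by
    have h1 : ∑ j, m j • a j = ∑ j, ∑ i, F j i :=
      Finset.sum_congr rfl fun j _ => hF j
    have h2 : (∑ j, ∑ i, F j i) = ∑ j, ∑ i, F i j := Finset.sum_comm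
    have h3 : (∑ j, ∑ i, F j i) = - ∑ j, ∑ i, F j i := by
      nth_rewrite 1 [h2]
      rw [← Finset.sum_neg_distrib]
      refine Finset.sum_congr rfl fun j _ => ?_
      rw [← Finset.sum_neg_distrib]
      exact Finset.sum_congr rfl fun i _ => hFanti j i
    have h4 : (∑ j, ∑ i, F j i) = 0 := by
      have h5 : (2 : ℝ) • (∑ j, ∑ i, F j i) = 0 := by
        rw [two_smul]
        nth_rewrite 2 [h3]
        abel
      rcases smul_eq_zero.mp h5 with h | h
      · norm_num at h
      · exact h
    rw [h1, h4]
  -- inner products with momentum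
  have hIN : ∀ v : EuclideanSpace ℝ (Fin 3), (∑ k, m k * ⟪v, a k⟫) = 0 := by
    intro v
    have : ⟪v, ∑ k, m k • a k⟫ = ∑ k, m k * ⟪v, a k⟫ := by
      rw [inner_sum]
      exact Finset.sum_congr rfl fun k _ => real_inner_smul_right _ _ _
    rw [← this, hmom, inner_zero_right]
  -- the "virial" quantity is negative
  set V : ℝ := ∑ j, m j * ⟪r j, a j⟫ with hVdef
  set f : Fin N → Fin N → ℝ := fun j i => if i = j then (0:ℝ)
    else (G * (m i * m j) / ‖r i - r j‖ ^ 3) * ⟪r j, r i - r j⟫ with hfdef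
  have hfV : ∀ j, m j * ⟪r j, a j⟫ = ∑ i, f j i := by
    intro j
    have h1 : m j * ⟪r j, a j⟫ = ⟪r j, m j • a j⟫ := (real_inner_smul_right _ _ _).symm
    rw [h1, hF j, inner_sum]
    refine Finset.sum_congr rfl fun i _ => ?_
    rw [hFdef, hfdef]
    by_cases h : i = j
    · simp [h]
    · simp only [if_neg h]
      exact real_inner_smul_right _ _ _
  have hsym : ∀ j i, f j i + f i j = if i = j then (0:ℝ)
      else -(G * (m i * m j) / ‖r i - r j‖ ^ 3 * ‖r i - r j‖ ^ 2) := by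
    intro j i
    by_cases h : i = j
    · simp [hfdef, h, eq_comm]
    · rw [hfdef]
      simp only [if_neg h, if_neg (Ne.symm h)]
      have hc : G * (m j * m i) / ‖r j - r i‖ ^ 3 = G * (m i * m j) / ‖r i - r j‖ ^ 3 := by
        rw [norm_sub_rev]; ring
      rw [hc]
      have hin : ⟪r j, r i - r j⟫ + ⟪r i, r j - r i⟫ = -(‖r i - r j‖ ^ 2) := by
        have he : ⟪r j, r i - r j⟫ + ⟪r i, r j - r i⟫ = ⟪r j - r i, r i - r j⟫ := by
          rw [inner_sub_left]
          have h9 : ⟪r i, r j - r i⟫ = -⟪r i, r i - r j⟫ := by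
            rw [← inner_neg_right, neg_sub]
          rw [h9]; ring
        rw [he]
        have h2 : r j - r i = -(r i - r j) := by abel
        rw [h2, inner_neg_left, real_inner_self_eq_norm_sq]
      rw [← mul_add, hin]
      ring
  have hterm_nonpos : ∀ j i : Fin N, (if i = j then (0:ℝ)
      else -(G * (m i * m j) / ‖r i - r j‖ ^ 3 * ‖r i - r j‖ ^ 2)) ≤ 0 := by
    intro j i
    split
    · exact le_refl 0
    · have h1 := (hm i).le
      have h2 := (hm j).le
      have h3 := hG.le
      have h4 : (0:ℝ) ≤ ‖r i - r j‖ := norm_nonneg _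
      have h5 : 0 ≤ G * (m i * m j) / ‖r i - r j‖ ^ 3 * ‖r i - r j‖ ^ 2 := by positivity
      linarith
  have hVneg : V < 0 := by
    have h1 : V = ∑ j, ∑ i, f j i := Finset.sum_congr rfl fun j _ => hfV j
    have h2 : V = ∑ j, ∑ i, f i j := by rw [h1]; exact Finset.sum_comm
    have hdouble : V + V = ∑ j, ∑ i, (f j i + f i j) := by
      calc V + V = (∑ j, ∑ i, f j i) + (∑ j, ∑ i, f i j) := by rw [← h1, ← h2]
        _ = ∑ j, ((∑ i, f j i) + (∑ i, f i j)) := Finset.sum_add_distrib.symm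
        _ = ∑ j, ∑ i, (f j i + f i j) :=
            Finset.sum_congr rfl fun j _ => Finset.sum_add_distrib.symm
    set j0 : Fin N := ⟨0, by omega⟩ with hj0
    set i1 : Fin N := ⟨1, by omega⟩ with hi1
    have hne : i1 ≠ j0 := by simp [hj0, hi1, Fin.ext_iff]
    have hd : 0 < ‖r i1 - r j0‖ := by
      rw [norm_pos_iff]
      exact sub_ne_zero_of_ne (hr i1 j0 hne)
    have hinner_neg : (∑ i, (if i = j0 then (0:ℝ)
        else -(G * (m i * m j0) / ‖r i - r j0‖ ^ 3 * ‖r i - r j0‖ ^ 2))) < 0 := by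
      calc (∑ i, (if i = j0 then (0:ℝ)
            else -(G * (m i * m j0) / ‖r i - r j0‖ ^ 3 * ‖r i - r j0‖ ^ 2)))
          < ∑ _i : Fin N, (0:ℝ) := ?_
        _ = 0 := Finset.sum_const_zero
      refine Finset.sum_lt_sum (fun i _ => hterm_nonpos j0 i) ⟨i1, Finset.mem_univ _, ?_⟩
      rw [if_neg hne]
      have hmi := hm i1
      have hmj := hm j0
      have h5 : 0 < G * (m i1 * m j0) / ‖r i1 - r j0‖ ^ 3 * ‖r i1 - r j0‖ ^ 2 := by positivity
      linarith
    have houter : (∑ j, ∑ i, (f j i + f i j)) < 0 := by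
      have hrw : ∀ j, (∑ i, (f j i + f i j)) = ∑ i, (if i = j then (0:ℝ)
          else -(G * (m i * m j) / ‖r i - r j‖ ^ 3 * ‖r i - r j‖ ^ 2)) :=
        fun j => Finset.sum_congr rfl fun i _ => hsym j i
      have hle : ∀ j ∈ Finset.univ (α := Fin N), (∑ i, (f j i + f i j)) ≤ 0 := by
        intro j _
        rw [hrw j]
        exact Finset.sum_nonpos fun i _ => hterm_nonpos j i
      have hlt : (∑ i, (f j0 i + f i j0)) < 0 := by rw [hrw j0]; exact hinner_neg
      calc (∑ j, ∑ i, (f j i + f i j)) < ∑ j : Fin N, (0:ℝ) :=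
            Finset.sum_lt_sum hle ⟨j0, Finset.mem_univ _, by simpa using hlt⟩
        _ = 0 := Finset.sum_const_zero
    linarith [hdouble ▸ houter]
  -- all pairwise inner products vanish
  have hz : ∀ j k : Fin N, ⟪r j - r k, a j - a k⟫ = 0 := by
    intro j k
    rcases lt_trichotomy j k with h | h | h
    · exact hcon j k h
    · simp [h]
    · have h0 := hcon k j h
      have hswap : ⟪r j - r k, a j - a k⟫ = ⟪r k - r j, a k - a j⟫ := by
        have h1 : r j - r k = -(r k - r j) := by abel
        have h2 : a j - a k = -(a k - a j) := by abel
        rw [h1, h2, inner_neg_neg]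
      rw [hswap, h0]
  -- the big double sum
  set M : ℝ := ∑ k, m k with hM
  have hMpos : 0 < M := by
    rw [hM]
    refine Finset.sum_pos (fun i _ => hm i) ?_
    exact Finset.univ_nonempty_iff.mpr ⟨⟨0, by omega⟩⟩
  have hterm : ∀ j k : Fin N, m j * m k * ⟪r j - r k, a j - a k⟫ =
      (m j * ⟪r j, a j⟫) * m k + (m k * ⟪r k, a k⟫) * m j
        - m j * (m k * ⟪r j, a k⟫) - m k * (m j * ⟪r k, a j⟫) := by
    intro j k
    rw [inner_sub_left, inner_sub_right, inner_sub_right]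
    ring
  have hsplit : (∑ j, ∑ k, m j * m k * ⟪r j - r k, a j - a k⟫)
      = (∑ j, ∑ k, (m j * ⟪r j, a j⟫) * m k) + (∑ j, ∑ k, (m k * ⟪r k, a k⟫) * m j)
        - (∑ j, ∑ k, m j * (m k * ⟪r j, a k⟫)) - (∑ j, ∑ k, m k * (m j * ⟪r k, a j⟫)) := by
    simp only [← Finset.sum_add_distrib, ← Finset.sum_sub_distrib]
    exact Finset.sum_congr rfl fun j _ => Finset.sum_congr rfl fun k _ => hterm j k
  have hS1 : (∑ j, ∑ k, (m j * ⟪r j, a j⟫) * m k) = V * M := by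
    have h1 : ∀ j : Fin N, (∑ k, (m j * ⟪r j, a j⟫) * m k) = (m j * ⟪r j, a j⟫) * M :=
      fun j => by rw [hM, ← Finset.mul_sum]
    rw [Finset.sum_congr rfl fun j _ => h1 j, ← Finset.sum_mul]
  have hS2 : (∑ j, ∑ k, (m k * ⟪r k, a k⟫) * m j) = V * M := by
    have h1 : ∀ j : Fin N, (∑ k, (m k * ⟪r k, a k⟫) * m j) = V * m j :=
      fun j => by rw [hVdef, ← Finset.sum_mul]
    rw [Finset.sum_congr rfl fun j _ => h1 j, ← Finset.mul_sum]
  have hS3 : (∑ j, ∑ k, m j * (m k * ⟪r j, a k⟫)) = 0 := by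
    refine Finset.sum_eq_zero fun j _ => ?_
    rw [← Finset.mul_sum, hIN (r j), mul_zero]
  have hS4 : (∑ j, ∑ k, m k * (m j * ⟪r k, a j⟫)) = 0 := by
    rw [Finset.sum_comm]
    refine Finset.sum_eq_zero fun k _ => ?_
    rw [← Finset.mul_sum, hIN (r k), mul_zero]
  have hzero : (∑ j, ∑ k, m j * m k * ⟪r j - r k, a j - a k⟫) = 0 := by
    refine Finset.sum_eq_zero fun j _ => Finset.sum_eq_zero fun k _ => ?_
    rw [hz j k, mul_zero]
  rw [hzero, hS1, hS2, hS3, hS4] at hsplit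
  nlinarith

/-- For pairwise distinct bodies there is always a pair `j < k` with
`⟪r_j - r_k, a_j - a_k⟫ ≠ 0`; that is, along any solution of the relative
system, for each time there is a pair for which `r_j - r_k` is not orthogonal
to `(r_j - r_k)''`. -/
theorem exists_pair_not_orthogonal (N : ℕ) (hN : 2 ≤ N) (G : ℝ) (hG : 0 < G)
    (m : Fin N → ℝ) (hm : ∀ i, 0 < m i)
    (r : Fin N → EuclideanSpace ℝ (Fin 3))
    (hr : ∀ i j, i ≠ j → r i ≠ r j) :
    (∃ j k : Fin N, j < k ∧
      ⟪r j - r k, nbodyAccel N G m r j - nbodyAccel N G m r k⟫ ≠ 0) ∧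
    (∀ (a b : ℝ) (rf : Fin N → ℝ → EuclideanSpace ℝ (Fin 3)),
      (∀ t ∈ Set.Icc a b, ∀ i j, i ≠ j → rf i t ≠ rf j t) →
      (∀ j k : Fin N, ∀ t ∈ Set.Icc a b,
        deriv (deriv (fun s => rf j s - rf k s)) t
          = nbodyAccel N G m (fun i => rf i t) j - nbodyAccel N G m (fun i => rf i t) k) →
      ∀ t ∈ Set.Icc a b, ∃ j k : Fin N, j < k ∧
        ⟪rf j t - rf k t, deriv (deriv (fun s => rf j s - rf k s)) t⟫ ≠ 0) := by
  constructor
  · exact key_pair N hN G hG m hm r hr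
  · intro a b rf hdist hacc t ht
    obtain ⟨j, k, hjk, hne⟩ :=
      key_pair N hN G hG m hm (fun i => rf i t) (fun i j hij => hdist t ht i j hij)
    exact ⟨j, k, hjk, by rw [hacc j k t ht]; exact hne⟩
end

section
/- Let N ≥ 2, G > 0, m : Fin N → ℝ with m i > 0, and let a < b. Suppose r : Fin N → ℝ → EuclideanSpace ℝ (Fin 3) are twice differentiable on [a,b] with r i t ≠ r j t for all i ≠ j and all t ∈ [a,b], and satisfy (r j − r k)'' t = a_j(r(t)) − a_k(r(t)) on [a,b] for all j, k, where a_j(x) = G • Σ_{i ≠ j} (m i / ‖x i − x j‖³) • (x i − x j). Then there exists a pair j < k such that the function t ↦ (r j − r k)'' t is not identically zero on [a,b]; hence r j − r k is not constant on [a,b], and at least one of the position functions r j, r k is not constant on [a,b]. -/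
open Set Finset

local notation "⟪" x ", " y "⟫" => @inner ℝ _ _ x y


lemma accel_inner (N : ℕ) (G : ℝ) (m : Fin N → ℝ)
    (x : Fin N → EuclideanSpace ℝ (Fin 3)) (j : Fin N) (u : EuclideanSpace ℝ (Fin 3)) :
    ⟪nbodyAccel N G m x j, u⟫
      = G * ∑ i ∈ Finset.univ.filter (fun i => i ≠ j),
          (m i / ‖x i - x j‖ ^ 3) * ⟪x i - x j, u⟫ := by
  rw [nbodyAccel, real_inner_smul_left, sum_inner]
  simp_rw [real_inner_smul_left]

lemma accel_ne (N : ℕ) (G : ℝ) (hG : 0 < G) (m : Fin N → ℝ) (hm : ∀ i, 0 < m i)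
    (x : Fin N → EuclideanSpace ℝ (Fin 3))
    (hx : ∀ i i', i ≠ i' → x i ≠ x i')
    (j k : Fin N) (hjk : j ≠ k)
    (hmax : ∀ i i', ‖x i - x i'‖ ≤ ‖x j - x k‖) :
    nbodyAccel N G m x j ≠ nbodyAccel N G m x k := by
  set u := x j - x k with hu
  have hune : u ≠ 0 := sub_ne_zero_of_ne (hx j k hjk)
  have hupos : 0 < ‖u‖ := norm_pos_iff.mpr hune
  have hinnerj : ⟪nbodyAccel N G m x j, u⟫ < 0 := by
    rw [accel_inner]
    have hsum : ∑ i ∈ Finset.univ.filter (fun i => i ≠ j),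
        (m i / ‖x i - x j‖ ^ 3) * ⟪x i - x j, u⟫
        ≤ ∑ i ∈ Finset.univ.filter (fun i => i ≠ j),
          (if i = k then -(m k / ‖u‖) else 0) := by
      apply Finset.sum_le_sum
      intro i hi
      simp only [Finset.mem_filter, Finset.mem_univ, true_and] at hi
      by_cases hik : i = k
      · subst hik
        have h1 : x i - x j = -u := by rw [hu]; abel
        rw [h1, if_pos rfl]
        rw [inner_neg_left, real_inner_self_eq_norm_sq, norm_neg]
        rw [div_mul_eq_mul_div]
        have he : m i * -‖u‖ ^ 2 / ‖u‖ ^ 3 = -(m i / ‖u‖) := by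
          field_simp
        rw [he]
      · rw [if_neg hik]
        apply mul_nonpos_of_nonneg_of_nonpos
        · exact div_nonneg (hm i).le (by positivity)
        · have h1 : x i - x j = (x i - x k) - u := by rw [hu]; abel
          rw [h1, inner_sub_left, real_inner_self_eq_norm_mul_norm]
          have h2 : ⟪x i - x k, u⟫ ≤ ‖x i - x k‖ * ‖u‖ := real_inner_le_norm _ _
          have h3 : ‖x i - x k‖ ≤ ‖u‖ := hmax i k
          nlinarith
    rw [Finset.sum_ite_eq' _ k, if_pos (by simp [Ne.symm hjk])] at hsum
    have hle : G * ∑ i ∈ Finset.univ.filter (fun i => i ≠ j),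
        (m i / ‖x i - x j‖ ^ 3) * ⟪x i - x j, u⟫ ≤ G * (-(m k / ‖u‖)) :=
      mul_le_mul_of_nonneg_left hsum hG.le
    have hneg : G * (-(m k / ‖u‖)) < 0 := by
      have : 0 < m k / ‖u‖ := div_pos (hm k) hupos
      nlinarith
    linarith
  have hinnerk : 0 ≤ ⟪nbodyAccel N G m x k, u⟫ := by
    rw [accel_inner]
    apply mul_nonneg hG.le
    apply Finset.sum_nonneg
    intro i hi
    apply mul_nonneg
    · exact div_nonneg (hm i).le (by positivity)
    · have h1 : x i - x k = (x i - x j) + u := by rw [hu]; abel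
      rw [h1, inner_add_left, real_inner_self_eq_norm_mul_norm]
      have h2 : |⟪x i - x j, u⟫| ≤ ‖x i - x j‖ * ‖u‖ := abs_real_inner_le_norm _ _
      have h3 : ‖x i - x j‖ ≤ ‖u‖ := hmax i j
      have h4 : -(‖x i - x j‖ * ‖u‖) ≤ ⟪x i - x j, u⟫ := neg_le_of_abs_le h2
      nlinarith
  intro h
  rw [h] at hinnerj
  linarith

/-- Along any solution of the relative system on `[a,b]` there is a pair
`j < k` for which `(r_j - r_k)''` is not identically zero; hence `r_j - r_k`
is not constant on `[a,b]`, and at least one of `r_j`, `r_k` is not constant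
on `[a,b]`. -/
theorem exists_pair_not_identically_zero (N : ℕ) (hN : 2 ≤ N) (G : ℝ) (hG : 0 < G)
    (m : Fin N → ℝ) (hm : ∀ i, 0 < m i)
    (a b : ℝ) (hab : a < b)
    (r : Fin N → ℝ → EuclideanSpace ℝ (Fin 3))
    (hdiff : ∀ i, ∀ t ∈ Set.Icc a b,
      DifferentiableAt ℝ (r i) t ∧ DifferentiableAt ℝ (deriv (r i)) t)
    (hne : ∀ t ∈ Set.Icc a b, ∀ i j, i ≠ j → r i t ≠ r j t)
    (hsys : ∀ j k : Fin N, ∀ t ∈ Set.Icc a b,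
      deriv (deriv (fun s => r j s - r k s)) t
        = nbodyAccel N G m (fun i => r i t) j - nbodyAccel N G m (fun i => r i t) k) :
    ∃ j k : Fin N, j < k ∧
      (¬ ∀ t ∈ Set.Icc a b, deriv (deriv (fun s => r j s - r k s)) t = 0) ∧
      (¬ ∃ v : EuclideanSpace ℝ (Fin 3), ∀ t ∈ Set.Icc a b, r j t - r k t = v) ∧
      ((¬ ∃ v : EuclideanSpace ℝ (Fin 3), ∀ t ∈ Set.Icc a b, r j t = v) ∨
        (¬ ∃ v : EuclideanSpace ℝ (Fin 3), ∀ t ∈ Set.Icc a b, r k t = v)) := by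
  set t0 := (a + b) / 2 with ht0def
  have ht0o : t0 ∈ Set.Ioo a b := ⟨by simp only [ht0def]; linarith, by simp only [ht0def]; linarith⟩
  have ht0 : t0 ∈ Set.Icc a b := Set.Ioo_subset_Icc_self ht0o
  set x : Fin N → EuclideanSpace ℝ (Fin 3) := fun i => r i t0 with hxdef
  have hx : ∀ i i', i ≠ i' → x i ≠ x i' := fun i i' h => hne t0 ht0 i i' h
  have main : ∀ j k : Fin N, j < k → (∀ i i', ‖x i - x i'‖ ≤ ‖x j - x k‖) →
      ∃ j k : Fin N, j < k ∧
      (¬ ∀ t ∈ Set.Icc a b, deriv (deriv (fun s => r j s - r k s)) t = 0) ∧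
      (¬ ∃ v : EuclideanSpace ℝ (Fin 3), ∀ t ∈ Set.Icc a b, r j t - r k t = v) ∧
      ((¬ ∃ v : EuclideanSpace ℝ (Fin 3), ∀ t ∈ Set.Icc a b, r j t = v) ∨
        (¬ ∃ v : EuclideanSpace ℝ (Fin 3), ∀ t ∈ Set.Icc a b, r k t = v)) := by
    intro j k hjk hmax
    have hane : nbodyAccel N G m x j ≠ nbodyAccel N G m x k :=
      accel_ne N G hG m hm x hx j k hjk.ne hmax
    have hd2 : deriv (deriv (fun s => r j s - r k s)) t0 ≠ 0 := by
      rw [hsys j k t0 ht0]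
      exact sub_ne_zero_of_ne hane
    have notconst : ¬ ∃ v : EuclideanSpace ℝ (Fin 3), ∀ t ∈ Set.Icc a b, r j t - r k t = v := by
      rintro ⟨v, hv⟩
      have hder : ∀ t ∈ Set.Ioo a b, deriv (fun s => r j s - r k s) t = 0 := by
        intro t ht
        have hev : (fun s => r j s - r k s) =ᶠ[nhds t] fun _ => v :=
          Filter.eventuallyEq_of_mem (isOpen_Ioo.mem_nhds ht)
            (fun s hs => hv s (Set.Ioo_subset_Icc_self hs))
        rw [hev.deriv_eq, deriv_const]
      have hev2 : deriv (fun s => r j s - r k s)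
          =ᶠ[nhds t0] fun _ => (0 : EuclideanSpace ℝ (Fin 3)) :=
        Filter.eventuallyEq_of_mem (isOpen_Ioo.mem_nhds ht0o) hder
      exact hd2 (by rw [hev2.deriv_eq, deriv_const])
    refine ⟨j, k, hjk, fun h => hd2 (h t0 ht0), notconst, ?_⟩
    by_cases hj : ∃ v : EuclideanSpace ℝ (Fin 3), ∀ t ∈ Set.Icc a b, r j t = v
    · right
      rintro ⟨w, hw⟩
      obtain ⟨v, hv⟩ := hj
      exact notconst ⟨v - w, fun t ht => by rw [hv t ht, hw t ht]⟩
    · exact Or.inl hj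
  obtain ⟨p, hp, hpmax⟩ := Finset.exists_max_image
    (Finset.univ ×ˢ Finset.univ : Finset (Fin N × Fin N)) (fun p => ‖x p.1 - x p.2‖)
    ⟨((⟨0, by omega⟩ : Fin N), (⟨1, by omega⟩ : Fin N)), by simp⟩
  have hmax' : ∀ i i', ‖x i - x i'‖ ≤ ‖x p.1 - x p.2‖ := fun i i' => hpmax (i, i') (by simp)
  have hpne : p.1 ≠ p.2 := by
    intro h
    have h01 : (⟨0, by omega⟩ : Fin N) ≠ (⟨1, by omega⟩ : Fin N) := by
      intro hh
      simpa using congrArg Fin.val hh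
    have hle := hmax' ⟨0, by omega⟩ ⟨1, by omega⟩
    rw [← h] at hle
    simp only [sub_self, norm_zero] at hle
    exact hx _ _ h01 (sub_eq_zero.mp (norm_le_zero_iff.mp hle))
  rcases lt_or_gt_of_ne hpne with hlt | hgt
  · exact main p.1 p.2 hlt hmax'
  · refine main p.2 p.1 hgt fun i i' => le_of_le_of_eq (hmax' i i') (norm_sub_rev _ _)
end

section
/- Let N ≥ 3, G > 0, m : Fin N → ℝ with m i > 0, and let a < b. Suppose r : Fin N → ℝ → EuclideanSpace ℝ (Fin 3) are twice differentiable on [a,b] with r i t ≠ r j t for all i ≠ j and all t ∈ [a,b], and satisfy the relative system (r j − r k)'' t = a_j(r(t)) − a_k(r(t)) on [a,b], where a_j(x) = G • Σ_{i ≠ j} (m i / ‖x i − x j‖³) • (x i − x j). Then there exist two distinct pairs of indices (j₁, j₂) and (j₃, j₄) with j₁ < j₂, j₃ < j₄, (j₁,j₂) ≠ (j₃,j₄), such that the function t ↦ (r j₁ − r j₂)'' t is not identically zero on [a,b] and the function t ↦ (r j₃ − r j₄)'' t is not identically zero on [a,b]. -/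
open Set Finset

lemma nbody_not_all_eq (N : ℕ) (hN : 3 ≤ N) (G : ℝ) (hG : 0 < G)
    (m : Fin N → ℝ) (hm : ∀ i, 0 < m i) (x : Fin N → EuclideanSpace ℝ (Fin 3))
    (hx : ∀ i j : Fin N, i ≠ j → x i ≠ x j) :
    ∃ j k : Fin N, nbodyAccel N G m x j ≠ nbodyAccel N G m x k := by
  by_contra hcon
  push_neg at hcon
  set A : Fin N → EuclideanSpace ℝ (Fin 3) := nbodyAccel N G m x with hAdef
  have hNpos : 0 < N := by omega
  have hd : ∀ i j : Fin N, i ≠ j → (0:ℝ) < ‖x i - x j‖ := by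
    intro i j hij
    rw [norm_pos_iff, sub_ne_zero]
    exact hx i j hij
  set F : Fin N → Fin N → EuclideanSpace ℝ (Fin 3) :=
    fun j i => if i ≠ j then (m j * G * (m i / ‖x i - x j‖ ^ 3)) • (x i - x j) else 0 with hF
  have hFanti : ∀ j i, F j i = - F i j := by
    intro j i
    by_cases h : i = j
    · subst h; simp [hF]
    · have h' : ¬ j = i := fun e => h e.symm
      simp only [hF, if_pos h, if_pos h', ne_eq, not_false_iff]
      rw [norm_sub_rev (x j) (x i)]
      have e1 : x j - x i = -(x i - x j) := by abel
      rw [e1, smul_neg, neg_neg]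
      ring_nf
  have hexp : ∀ j, m j • A j = ∑ i, F j i := by
    intro j
    rw [hAdef]
    show m j • nbodyAccel N G m x j = _
    rw [nbodyAccel, smul_smul, Finset.smul_sum, Finset.sum_filter]
    refine Finset.sum_congr rfl fun i _ => ?_
    by_cases h : i ≠ j
    · simp only [hF, if_pos h, smul_smul]
    · push_neg at h; simp [hF, h]
  have hS : ∑ j, ∑ i, F j i = 0 := by
    have h1 : ∑ j, ∑ i, F j i = ∑ j, ∑ i, F i j := Finset.sum_comm
    have h2 : ∑ j, ∑ i, F i j = - ∑ j, ∑ i, F j i := by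
      rw [← Finset.sum_neg_distrib]
      refine Finset.sum_congr rfl fun j _ => ?_
      rw [← Finset.sum_neg_distrib]
      exact Finset.sum_congr rfl fun i _ => hFanti i j
    have h3 : ∑ j, ∑ i, F j i = - ∑ j, ∑ i, F j i := h1.trans h2
    have h4 : (2:ℝ) • ∑ j, ∑ i, F j i = 0 := by
      rw [two_smul]; nth_rewrite 2 [h3]; abel
    simpa using (smul_eq_zero.mp h4).resolve_left (by norm_num)
  have hMA : (∑ j, m j) • A ⟨0, hNpos⟩ = 0 := by
    rw [Finset.sum_smul, ← hS]
    refine Finset.sum_congr rfl fun j _ => ?_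
    rw [← hexp j, hcon j ⟨0, hNpos⟩]
  have hMpos : 0 < ∑ j, m j :=
    Finset.sum_pos (fun j _ => hm j) ⟨⟨0, hNpos⟩, Finset.mem_univ _⟩
  have hA0 : ∀ j, A j = 0 := by
    intro j
    rw [hcon j ⟨0, hNpos⟩]
    exact (smul_eq_zero.mp hMA).resolve_left (ne_of_gt hMpos)
  set H : Fin N → Fin N → ℝ :=
    fun j i => if i ≠ j then m j * G * (m i / ‖x i - x j‖ ^ 3) * inner ℝ (x i - x j) (x j) else 0
    with hH
  have hTzero : ∑ j, ∑ i, H j i = (0:ℝ) := by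
    have key : ∀ j, ∑ i, H j i = m j * (inner ℝ (A j) (x j) : ℝ) := by
      intro j
      rw [hAdef]
      show _ = m j * (inner ℝ (nbodyAccel N G m x j) (x j) : ℝ)
      rw [nbodyAccel, real_inner_smul_left, sum_inner, Finset.mul_sum, Finset.mul_sum,
        Finset.sum_filter]
      refine Finset.sum_congr rfl fun i _ => ?_
      by_cases h : i ≠ j
      · simp only [hH, if_pos h, real_inner_smul_left]; ring
      · simp [hH, h]
    rw [Finset.sum_congr rfl (fun j _ => key j)]
    simp [hA0]
  have hHH : ∀ j i : Fin N, i ≠ j → H j i + H i j = -(m j * G * m i / ‖x i - x j‖) := by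
    intro j i h
    have h' : ¬ j = i := fun e => h e.symm
    simp only [hH, if_pos h, if_pos h', ne_eq, not_false_iff]
    rw [norm_sub_rev (x j) (x i)]
    have e1 : x j - x i = -(x i - x j) := by abel
    rw [e1, inner_neg_left]
    have e2 : (inner ℝ (x i - x j) (x j) : ℝ) - inner ℝ (x i - x j) (x i)
        = - ‖x i - x j‖ ^ 2 := by
      rw [← inner_sub_right, ← real_inner_self_eq_norm_sq,
        show x j - x i = -(x i - x j) by abel, inner_neg_right]
    have hdpos := hd i j h
    have hdne : ‖x i - x j‖ ≠ 0 := ne_of_gt hdpos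
    have e3 : m j * G * (m i / ‖x i - x j‖ ^ 3) * (inner ℝ (x i - x j) (x j) : ℝ)
        + m i * G * (m j / ‖x i - x j‖ ^ 3) * -(inner ℝ (x i - x j) (x i) : ℝ)
        = m j * G * m i / ‖x i - x j‖ ^ 3 *
          ((inner ℝ (x i - x j) (x j) : ℝ) - inner ℝ (x i - x j) (x i)) := by ring
    rw [e3, e2]
    field_simp
  -- strict negativity
  have hterm : ∀ j i : Fin N, H j i + H i j ≤ 0 := by
    intro j i
    by_cases h : i = j
    · subst h; simp [hH]
    · rw [hHH j i h]
      have : 0 < m j * G * m i / ‖x i - x j‖ := by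
        have := hd i j h; have := hm i; have := hm j; positivity
      linarith
  have hne01 : (⟨1, by omega⟩ : Fin N) ≠ ⟨0, by omega⟩ := by
    simp [Fin.ext_iff]
  have htermlt : H (⟨0, by omega⟩ : Fin N) ⟨1, by omega⟩
      + H (⟨1, by omega⟩ : Fin N) ⟨0, by omega⟩ < 0 := by
    rw [hHH _ _ hne01]
    have : 0 < m (⟨0, by omega⟩ : Fin N) * G * m ⟨1, by omega⟩
        / ‖x (⟨1, by omega⟩ : Fin N) - x ⟨0, by omega⟩‖ := by
      have := hd (⟨1, by omega⟩ : Fin N) ⟨0, by omega⟩ hne01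
      have := hm (⟨0, by omega⟩ : Fin N); have := hm (⟨1, by omega⟩ : Fin N)
      positivity
    linarith
  have hinner : ∑ i, (H (⟨0, by omega⟩ : Fin N) i + H i ⟨0, by omega⟩) < 0 := by
    have := Finset.sum_lt_sum (s := Finset.univ)
      (f := fun i => H (⟨0, by omega⟩ : Fin N) i + H i ⟨0, by omega⟩)
      (g := fun _ => (0:ℝ))
      (fun i _ => hterm _ i) ⟨⟨1, by omega⟩, Finset.mem_univ _, htermlt⟩
    simpa using this
  have houter : ∑ j, ∑ i, (H j i + H i j) < 0 := by
    have := Finset.sum_lt_sum (s := Finset.univ)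
      (f := fun j => ∑ i, (H j i + H i j))
      (g := fun _ => (0:ℝ))
      (fun j _ => Finset.sum_nonpos (fun i _ => hterm j i))
      ⟨⟨0, by omega⟩, Finset.mem_univ _, hinner⟩
    simpa using this
  have hsplit : ∑ j, ∑ i, (H j i + H i j) = 2 * ∑ j, ∑ i, H j i := by
    rw [two_mul]
    have hc : ∑ j, ∑ i, H i j = ∑ j, ∑ i, H j i := Finset.sum_comm
    calc ∑ j, ∑ i, (H j i + H i j)
        = ∑ j, (∑ i, H j i + ∑ i, H i j) := by
          exact Finset.sum_congr rfl fun j _ => Finset.sum_add_distrib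
      _ = ∑ j, ∑ i, H j i + ∑ j, ∑ i, H i j := Finset.sum_add_distrib
      _ = ∑ j, ∑ i, H j i + ∑ j, ∑ i, H j i := by rw [hc]
  rw [hsplit, hTzero] at houter
  linarith


/-- For `N ≥ 3`, along any solution of the relative system on `[a,b]` there are
two distinct pairs of indices for which the relative acceleration is not
identically zero on `[a,b]`. -/
theorem exists_two_pairs_not_identically_zero (N : ℕ) (hN : 3 ≤ N) (G : ℝ) (hG : 0 < G)
    (m : Fin N → ℝ) (hm : ∀ i, 0 < m i)
    (a b : ℝ) (hab : a < b)
    (r : Fin N → ℝ → EuclideanSpace ℝ (Fin 3))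
    (hdiff : ∀ i, ∀ t ∈ Set.Icc a b,
      DifferentiableAt ℝ (r i) t ∧ DifferentiableAt ℝ (deriv (r i)) t)
    (hne : ∀ t ∈ Set.Icc a b, ∀ i j, i ≠ j → r i t ≠ r j t)
    (hsys : ∀ j k : Fin N, ∀ t ∈ Set.Icc a b,
      deriv (deriv (fun s => r j s - r k s)) t
        = nbodyAccel N G m (fun i => r i t) j - nbodyAccel N G m (fun i => r i t) k) :
    ∃ j₁ j₂ j₃ j₄ : Fin N, j₁ < j₂ ∧ j₃ < j₄ ∧ (j₁, j₂) ≠ (j₃, j₄) ∧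
      (¬ ∀ t ∈ Set.Icc a b, deriv (deriv (fun s => r j₁ s - r j₂ s)) t = 0) ∧
      (¬ ∀ t ∈ Set.Icc a b, deriv (deriv (fun s => r j₃ s - r j₄ s)) t = 0) := by
  have ha : a ∈ Set.Icc a b := ⟨le_refl a, le_of_lt hab⟩
  have hx : ∀ i j : Fin N, i ≠ j → (fun i => r i a) i ≠ (fun i => r i a) j :=
    fun i j h => hne a ha i j h
  obtain ⟨j, k, hjk⟩ := nbody_not_all_eq N hN G hG m hm (fun i => r i a) hx
  have hjkne : j ≠ k := by rintro rfl; exact hjk rfl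
  obtain ⟨l, hlj, hlk⟩ : ∃ l : Fin N, l ≠ j ∧ l ≠ k := by
    by_contra hc; push_neg at hc
    have hsub : (Finset.univ : Finset (Fin N)) ⊆ {j, k} := by
      intro l _
      rcases eq_or_ne l j with rfl | h
      · exact Finset.mem_insert_self _ _
      · rw [hc l h]; exact Finset.mem_insert_of_mem (Finset.mem_singleton_self _)
    have h1 := Finset.card_le_card hsub
    have h2 : ({j, k} : Finset (Fin N)).card ≤ 2 := by
      apply le_trans (Finset.card_insert_le _ _); simp
    rw [Finset.card_univ, Fintype.card_fin] at h1
    omega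
  have mk : ∀ u v : Fin N, u ≠ v →
      nbodyAccel N G m (fun i => r i a) u ≠ nbodyAccel N G m (fun i => r i a) v →
      ∃ p q : Fin N, p < q ∧ ((p = u ∧ q = v) ∨ (p = v ∧ q = u)) ∧
        ¬ ∀ t ∈ Set.Icc a b, deriv (deriv (fun s => r p s - r q s)) t = 0 := by
    intro u v huv hA
    rcases lt_or_gt_of_ne huv with h | h
    · refine ⟨u, v, h, Or.inl ⟨rfl, rfl⟩, fun hz => hA ?_⟩
      have h0 := hz a ha
      rw [hsys u v a ha] at h0
      exact sub_eq_zero.mp h0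
    · refine ⟨v, u, h, Or.inr ⟨rfl, rfl⟩, fun hz => hA.symm ?_⟩
      have h0 := hz a ha
      rw [hsys v u a ha] at h0
      exact sub_eq_zero.mp h0
  have hl : nbodyAccel N G m (fun i => r i a) l ≠ nbodyAccel N G m (fun i => r i a) j ∨
      nbodyAccel N G m (fun i => r i a) l ≠ nbodyAccel N G m (fun i => r i a) k := by
    by_contra hc; push_neg at hc
    exact hjk (hc.1.symm.trans hc.2)
  obtain ⟨p₁, q₁, h₁lt, h₁set, h₁nz⟩ := mk j k hjkne hjk
  have hp₁ : (p₁ = j ∨ p₁ = k) ∧ (q₁ = j ∨ q₁ = k) := by tauto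
  rcases hl with hAl | hAl
  · obtain ⟨p₂, q₂, h₂lt, h₂set, h₂nz⟩ := mk l j hlj hAl
    refine ⟨p₁, q₁, p₂, q₂, h₁lt, h₂lt, ?_, h₁nz, h₂nz⟩
    intro hpq
    rw [Prod.mk.injEq] at hpq
    rcases h₁set with ⟨rfl, rfl⟩ | ⟨rfl, rfl⟩ <;>
      rcases h₂set with ⟨rfl, rfl⟩ | ⟨rfl, rfl⟩ <;>
      first
        | exact hlj hpq.1.symm | exact hlj hpq.2.symm
        | exact hlk hpq.1.symm | exact hlk hpq.2.symm
  · obtain ⟨p₂, q₂, h₂lt, h₂set, h₂nz⟩ := mk l k hlk hAl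
    refine ⟨p₁, q₁, p₂, q₂, h₁lt, h₂lt, ?_, h₁nz, h₂nz⟩
    intro hpq
    rw [Prod.mk.injEq] at hpq
    rcases h₁set with ⟨rfl, rfl⟩ | ⟨rfl, rfl⟩ <;>
      rcases h₂set with ⟨rfl, rfl⟩ | ⟨rfl, rfl⟩ <;>
      first
        | exact hlj hpq.1.symm | exact hlj hpq.2.symm
        | exact hlk hpq.1.symm | exact hlk hpq.2.symm
end

section
/- Let N ≥ 3, G > 0, m : Fin N → ℝ with m i > 0, and let r : Fin N → EuclideanSpace ℝ (Fin 3) with r i ≠ r j for all i ≠ j. Define a_j = G • Σ_{i ≠ j} (m i / ‖r i − r j‖³) • (r i − r j). Then there exist two distinct indices i ≠ j such that a_i ≠ 0 and a_j ≠ 0; that is, at each instant at least two bodies accelerate. -/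
open Set Finset

local notation "⟪" x ", " y "⟫_ℝ" => @inner ℝ _ _ x y

lemma nbodyAccel_ne_zero_aux (N : ℕ) (G : ℝ) (hG : 0 < G) (m : Fin N → ℝ)
    (hm : ∀ i, 0 < m i) (r : Fin N → EuclideanSpace ℝ (Fin 3))
    (u : EuclideanSpace ℝ (Fin 3)) (j : Fin N)
    (hnn : ∀ i, 0 ≤ ⟪r i - r j, u⟫_ℝ) (k : Fin N) (hk : k ≠ j)
    (hpos : 0 < ⟪r k - r j, u⟫_ℝ) : nbodyAccel N G m r j ≠ 0 := by
  intro h0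
  have h := congrArg (fun v => ⟪v, u⟫_ℝ) h0
  simp only [nbodyAccel, inner_zero_left] at h
  rw [real_inner_smul_left, sum_inner] at h
  have hsum : 0 < ∑ i ∈ Finset.univ.filter (fun i => i ≠ j),
      ⟪(m i / ‖r i - r j‖ ^ 3) • (r i - r j), u⟫_ℝ := by
    apply Finset.sum_pos'
    · intro i _
      rw [real_inner_smul_left]
      exact mul_nonneg (div_nonneg (hm i).le (by positivity)) (hnn i)
    · refine ⟨k, by simp [hk], ?_⟩
      rw [real_inner_smul_left]
      have hne : r k - r j ≠ 0 := by
        intro hxx; rw [hxx] at hpos; simp at hpos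
      have hn : 0 < ‖r k - r j‖ := norm_pos_iff.mpr hne
      exact mul_pos (div_pos (hm k) (by positivity)) hpos
  nlinarith

/-- For `N ≥ 3` bodies in pairwise distinct positions, at least two bodies have
nonzero Newtonian acceleration: at each instant at least two bodies accelerate. -/
theorem at_least_two_bodies_accelerate (N : ℕ) (hN : 3 ≤ N) (G : ℝ) (hG : 0 < G)
    (m : Fin N → ℝ) (hm : ∀ i, 0 < m i)
    (r : Fin N → EuclideanSpace ℝ (Fin 3))
    (hr : ∀ i j, i ≠ j → r i ≠ r j) :
    ∃ i j : Fin N, i ≠ j ∧ nbodyAccel N G m r i ≠ 0 ∧ nbodyAccel N G m r j ≠ 0 := by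
  set i0 : Fin N := ⟨0, by omega⟩ with hi0
  set i1 : Fin N := ⟨1, by omega⟩ with hi1
  have h01 : i0 ≠ i1 := by simp [hi0, hi1, Fin.ext_iff]
  set u : EuclideanSpace ℝ (Fin 3) := r i0 - r i1 with hu
  have hu0 : u ≠ 0 := sub_ne_zero.mpr (hr _ _ h01)
  obtain ⟨j, -, hj⟩ := Finset.exists_min_image Finset.univ
    (fun i => ⟪r i, u⟫_ℝ) ⟨i0, Finset.mem_univ _⟩
  obtain ⟨k, -, hk⟩ := Finset.exists_max_image Finset.univ
    (fun i => ⟪r i, u⟫_ℝ) ⟨i0, Finset.mem_univ _⟩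
  have hself : 0 < ⟪u, u⟫_ℝ := by
    rw [real_inner_self_eq_norm_sq]
    exact pow_pos (norm_pos_iff.mpr hu0) 2
  have h10 : ⟪r i1, u⟫_ℝ < ⟪r i0, u⟫_ℝ := by
    have := inner_sub_left (𝕜 := ℝ) (r i0) (r i1) u
    rw [← hu] at this
    linarith
  have hjk : ⟪r j, u⟫_ℝ < ⟪r k, u⟫_ℝ :=
    lt_of_le_of_lt (hj i1 (Finset.mem_univ _))
      (lt_of_lt_of_le h10 (hk i0 (Finset.mem_univ _)))
  have hjk' : j ≠ k := fun h => by rw [h] at hjk; exact lt_irrefl _ hjk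
  refine ⟨j, k, hjk', ?_, ?_⟩
  · refine nbodyAccel_ne_zero_aux N G hG m hm r u j ?_ k hjk'.symm ?_
    · intro i
      rw [inner_sub_left]
      have := hj i (Finset.mem_univ _)
      linarith
    · rw [inner_sub_left]; linarith
  · refine nbodyAccel_ne_zero_aux N G hG m hm r (-u) k ?_ j hjk' ?_
    · intro i
      rw [inner_neg_right, inner_sub_left]
      have := hk i (Finset.mem_univ _)
      nlinarith [hk i (Finset.mem_univ _)]
    · rw [inner_neg_right, inner_sub_left]
      nlinarith
end
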